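/- arXiv:2209.06044 — 5 statements merged into one kernel-verified Lean document; each statement's English description precedes it below -/
import Mathlib

section
/- Let Z ⊂ ℤ be a finite set with e elements and let ℂ[Z] be the e-dimensional vector space of Laurent polynomials f ∈ ℂ[t,t⁻¹] whose support is contained in Z. Then the set of vanishing orders at t = 1 of the nonzero elements of ℂ[Z] is exactly {0, 1, …, e−1}. -/
/-!
Multiplying by a power of `T` reduces everything to polynomials. If `(X - 1)^k ∣ q ≠ 0`, then
`q` has more than `k` monomials: for `n₀` in the support, `X q' - n₀ q` kills the monomial of
degree `n₀`, keeps the others and is still divisible by `(X - 1)^(k-1)`, so induction applies.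
Conversely, the polynomials supported on a set of size `k + 1` form a space of dimension `k + 1`,
while the remainders modulo `(X - 1)^k` form one of dimension `k`, so some nonzero such
polynomial is divisible by `(X - 1)^k`; by the bound it is not divisible by `(X - 1)^(k+1)`.
-/

open Polynomial Finset

namespace Polynomial

variable {R K : Type*}

lemma coeff_X_mul_derivative [Semiring R] (q : R[X]) (n : ℕ) :
    (X * derivative q).coeff n = n * q.coeff n := by
  cases n with
  | zero => simp
  | succ m => rw [coeff_X_mul, coeff_derivative, ← Nat.cast_succ, Nat.cast_comm]

section Domain

variable [CommRing R] [IsDomain R]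

lemma one_lt_card_support_of_X_sub_C_dvd {q : R[X]} {a : R} (hq : q ≠ 0) (ha : a ≠ 0)
    (h : X - C a ∣ q) : 1 < #q.support := by
  have hpos : 0 < #q.support := card_pos.mpr (nonempty_support_iff.mpr hq)
  refine lt_of_le_of_ne hpos fun h1 => ?_
  obtain ⟨n, c, hc, rfl⟩ := card_support_eq_one.mp h1.symm
  have := (dvd_iff_isRoot.mp h).eq_zero
  simp [hc, ha] at this

variable [CharZero R]

lemma support_X_mul_derivative_sub_C_mul (q : R[X]) (n₀ : ℕ) :
    (X * derivative q - C (n₀ : R) * q).support = q.support.erase n₀ := by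
  ext n
  simp only [mem_support_iff, coeff_sub, coeff_X_mul_derivative, coeff_C_mul, ← sub_mul,
    mem_erase, ne_eq, mul_eq_zero, sub_eq_zero, Nat.cast_inj, not_or]

theorem lt_card_support_of_X_sub_C_pow_dvd {a : R} (ha : a ≠ 0) {k : ℕ} {q : R[X]}
    (hq : q ≠ 0) (h : (X - C a) ^ k ∣ q) : k < #q.support := by
  induction k generalizing q with
  | zero => exact card_pos.mpr (nonempty_support_iff.mpr hq)
  | succ k ih =>
    have h1 := one_lt_card_support_of_X_sub_C_dvd hq ha ((dvd_pow_self _ k.succ_ne_zero).trans h)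
    obtain ⟨n₀, hn₀⟩ := nonempty_support_iff.mpr hq
    set q₁ := X * derivative q - C (n₀ : R) * q
    have hsupp : #q₁.support = #q.support - 1 := by
      rw [support_X_mul_derivative_sub_C_mul, card_erase_of_mem hn₀]
    have hq₁ : q₁ ≠ 0 := fun h0 => by
      rw [h0, support_zero, card_empty] at hsupp; omega
    have hdvd : (X - C a) ^ k ∣ q₁ :=
      dvd_sub ((pow_sub_one_dvd_derivative_of_pow_dvd h).mul_left X)
        (((pow_dvd_pow _ k.le_succ).trans h).mul_left _)
    have := ih hq₁ hdvd
    omega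

end Domain

variable [Field K]

theorem exists_ne_zero_support_subset_dvd {p : K[X]} (hp : p.Monic) {S : Finset ℕ}
    (hS : p.natDegree < #S) : ∃ q : K[X], q ≠ 0 ∧ q.support ⊆ S ∧ p ∣ q := by
  let embed : (S → K) →ₗ[K] K[X] := Fintype.linearCombination K fun s : S ↦ X ^ (s : ℕ)
  have hcoeff (c : S → K) (n : ℕ) :
      (embed c).coeff n = if h : n ∈ S then c ⟨n, h⟩ else 0 := by
    simp only [embed, Fintype.linearCombination_apply, finsetSum_coeff, coeff_smul, coeff_X_pow,
      smul_eq_mul, mul_ite, mul_one, mul_zero]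
    split_ifs with h
    · rw [Finset.sum_eq_single ⟨n, h⟩] <;> grind
    · exact sum_eq_zero fun s _ => if_neg fun (e : n = s) => h (e ▸ s.2)
  let rem : (S → K) →ₗ[K] degreeLT K p.natDegree :=
    ((modByMonicHom p).comp embed).codRestrict _ fun c ↦ mem_degreeLT.mpr <| by
      simpa [degree_eq_natDegree hp.ne_zero] using degree_modByMonic_lt (embed c) hp
  have hker : LinearMap.ker rem ≠ ⊥ := LinearMap.ker_ne_bot_of_finrank_lt <| by
    simpa [(degreeLTEquiv K _).finrank_eq] using hS
  obtain ⟨c, hc, hc0⟩ := (Submodule.ne_bot_iff _).mp hker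
  obtain ⟨s, hs⟩ := Function.ne_iff.mp hc0
  refine ⟨embed c, fun h0 => hs ?_, fun n hn => ?_, ?_⟩
  · simpa [hcoeff] using congr_arg (coeff · s) h0
  · by_contra hnS
    simp [hcoeff, hnS] at hn
  · rw [← modByMonic_eq_zero_iff_dvd hp]
    simpa [rem, Subtype.ext_iff] using hc

theorem toLaurent_dvd_toLaurent_iff [CommRing R] {p q : R[X]}
    (hp : IsCoprime p X) : toLaurent p ∣ toLaurent q ↔ p ∣ q := by
  refine ⟨fun ⟨g, hg⟩ => ?_, _root_.map_dvd toLaurent⟩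
  obtain ⟨n, g', hg'⟩ := g.exists_T_pow
  have : q * X ^ n = p * g' := toLaurent_injective <| by
    simp [hg, hg', mul_assoc]
  exact hp.pow_right.dvd_of_dvd_mul_right ⟨g', this⟩

end Polynomial

namespace LaurentPolynomial

lemma support_coeff_mul_T [Semiring R] (f : R[T;T⁻¹]) (n : ℤ) :
    (f * T n).coeff.support = f.coeff.support.map (addRightEmbedding n) :=
  AddMonoidAlgebra.support_coeff_mul_single f 1 (by simp) n

theorem lt_card_support_of_pow_dvd [CommRing R] [IsDomain R] [CharZero R] {f : R[T;T⁻¹]}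
    (hf : f ≠ 0) {k : ℕ} (h : (T 1 - 1) ^ k ∣ f) : k < #f.coeff.support := by
  obtain ⟨n, q, hq⟩ := f.exists_T_pow
  have hq0 : q ≠ 0 := by
    rintro rfl
    simp [eq_comm, (isUnit_T _).mul_left_eq_zero, hf] at hq
  have hcop : IsCoprime (X - 1 : R[X]) X := ⟨-1, 1, by ring⟩
  have hdvd : (X - 1) ^ k ∣ q := by
    rw [← toLaurent_dvd_toLaurent_iff hcop.pow_left, hq]
    simpa using h.mul_right _
  have := lt_card_support_of_X_sub_C_pow_dvd one_ne_zero hq0 (by rwa [map_one])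
  rwa [← card_map, ← support_coeff_toLaurent, hq, support_coeff_mul_T, card_map] at this

theorem exists_ne_zero_support_subset_pow_dvd [Field K] {Z : Finset ℤ} {k : ℕ} (hk : k < #Z) :
    ∃ f : K[T;T⁻¹], f ≠ 0 ∧ f.coeff.support ⊆ Z ∧ (T 1 - 1) ^ k ∣ f := by
  obtain ⟨m, hm⟩ := Z.bddBelow
  let S := Z.image fun z => (z - m).toNat
  have hS : #S = #Z := card_image_of_injOn fun x hx y hy hxy => by
    have := hm hx; have := hm hy; omega
  obtain ⟨q, hq0, hqS, hdvd⟩ :=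
    exists_ne_zero_support_subset_dvd ((monic_X_sub_C (1 : K)).pow k) (S := S)
      (by rwa [natDegree_pow, natDegree_X_sub_C, mul_one, hS])
  refine ⟨toLaurent q * T m, mul_ne_zero (toLaurent_ne_zero.mpr hq0) (isUnit_T m).ne_zero,
    ?_, ?_⟩
  · rw [support_coeff_mul_T, support_coeff_toLaurent, Finset.map_map]
    intro x hx
    obtain ⟨n, hn, rfl⟩ := mem_map.mp hx
    obtain ⟨z, hz, rfl⟩ := mem_image.mp (hqS hn)
    have := hm hz
    convert hz
    simp only [Function.Embedding.trans_apply, Nat.castEmbedding_apply, addRightEmbedding_apply]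
    omega
  · simpa using (map_dvd toLaurent hdvd).mul_right (T m)

end LaurentPolynomial

open LaurentPolynomial in
theorem stmt0 (Z : Finset ℤ) :
    {k : ℕ | ∃ f : LaurentPolynomial ℂ, f ≠ 0 ∧ f.coeff.support ⊆ Z ∧
      (T 1 - 1) ^ k ∣ f ∧ ¬ (T 1 - 1) ^ (k + 1) ∣ f} =
    {k : ℕ | k < Z.card} := by
  ext k
  refine ⟨fun ⟨f, hf, hfZ, hdvd, _⟩ => (lt_card_support_of_pow_dvd hf hdvd).trans_le
    (card_le_card hfZ), fun hk => ?_⟩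
  obtain ⟨Z', hZ'Z, hZ'⟩ := exists_subset_card_eq (show k + 1 ≤ #Z from hk)
  obtain ⟨f, hf, hfZ', hdvd⟩ :=
    exists_ne_zero_support_subset_pow_dvd (K := ℂ) (by omega : k < #Z')
  refine ⟨f, hf, hfZ'.trans hZ'Z, hdvd, fun hdvd' => ?_⟩
  have := (lt_card_support_of_pow_dvd hf hdvd').trans_le (card_le_card hfZ')
  omega
end

section
/- Let S ⊆ M ≅ ℤⁿ be a strictly positive semigroup with respect to a height function h : M → ℤ whose limit figure Δ_S is a polytope. If every vertex of Δ_S lifts to S, then every vertex is a rational point, and moreover every rational point p ∈ Δ_S ∩ (M ⊗ ℚ) lifts to S, i.e., there exists c ∈ ℚ_{>0} with c·p ∈ S. -/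
/-!
If `c • p = s ∈ S` for a vertex `p`, then applying the height (`p` lies on `h = 1`) gives
`c = h s`, so `p = s / h s` is rational. The polytope `Δ` is the convex hull of its finitely many
vertices, and a rational point in the real convex hull of rational points is a rational convex
combination of them: by Carathéodory the points may be taken affinely independent, and then the
barycentric coordinates are the unique solution of a rational linear system. Finally the points
having a positive integer multiple in `S` form a `ℚ`-convex cone; it contains the vertices, hence
every rational point of `Δ`.
-/

open Finset Matrix

theorem Matrix.exists_comp_eq_of_map_mulVec_eq {m k K L : Type*} [Fintype m] [Fintype k]
    [Field K] [Field L] (f : K →+* L) {A : Matrix m k K}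
    (hA : ∀ v, A *ᵥ v = 0 → v = 0) {x : k → L} {b : m → K} (hx : A.map f *ᵥ x = f ∘ b) :
    ∃ y : k → K, x = f ∘ y := by
  classical
  obtain ⟨g, hg⟩ := (toLin' A).exists_leftInverse_of_injective
    (LinearMap.ker_eq_bot'.2 fun v hv => hA v (by rwa [toLin'_apply] at hv))
  set B := LinearMap.toMatrix' g
  have hBA : B * A = 1 := by
    rw [← LinearMap.toMatrix'_toLin' A, ← LinearMap.toMatrix'_comp, hg, LinearMap.toMatrix'_id]
  refine ⟨B *ᵥ b, ?_⟩
  calc x = (B * A).map f *ᵥ x := by rw [hBA, Matrix.map_one f f.map_zero f.map_one, one_mulVec]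
    _ = B.map f *ᵥ (A.map f *ᵥ x) := by rw [Matrix.map_mul, mulVec_mulVec]
    _ = f ∘ (B *ᵥ b) := by rw [hx]; ext i; exact (RingHom.map_mulVec f B b i).symm

theorem AffineIndependent.exists_comp_eq_of_sum_smul_eq {κ ι K L : Type*} [Fintype κ] [Fintype ι]
    [Field K] [Field L] (f : K →+* L) {ρ : κ → ι → K} (hρ : AffineIndependent L fun j => f ∘ ρ j)
    {w : κ → L} {q : ι → K} (hw : ∑ j, w j = 1) (hwq : ∑ j, w j • f ∘ ρ j = f ∘ q) :
    ∃ y : κ → K, w = f ∘ y := by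
  -- the weights solve the system whose rows are the constant `1` and the coordinates of `ρ`
  let A : Matrix (Option ι) κ K := of fun r j => r.elim 1 (ρ j)
  have hA_none (v : κ → K) : (A *ᵥ v) none = ∑ j, v j := by simp [A, mulVec, dotProduct]
  have hA_some (v : κ → K) (i : ι) : (A *ᵥ v) (some i) = ∑ j, v j * ρ j i := by
    simp [A, mulVec, dotProduct, mul_comm]
  refine Matrix.exists_comp_eq_of_map_mulVec_eq f (A := A) (b := fun r => r.elim 1 q)
    (fun v hv => funext fun j => ?_) ?_
  · refine (map_eq_zero f).1 (hρ.eq_zero_of_sum_eq_zero (w := f ∘ v) ?_ ?_ j (mem_univ j))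
    · simpa [← map_sum, ← hA_none] using congrFun hv none
    · ext i
      simpa [← map_mul, ← map_sum, ← hA_some] using congrFun hv (some i)
  · ext (_ | i)
    · simpa [A, mulVec, dotProduct] using hw
    · simpa [A, mulVec, dotProduct, mul_comm] using congrFun hwq i

theorem mem_convexHull_of_ratCast_mem_convexHull {ι : Type*} [Fintype ι] {V : Set (ι → ℚ)}
    {q : ι → ℚ} (hq : (fun i => (q i : ℝ)) ∈ convexHull ℝ ((fun v i => (v i : ℝ)) '' V)) :
    q ∈ convexHull ℚ V := by
  obtain ⟨κ, _, z, w, hzV, hz, hw0, hw1, hwz⟩ := eq_pos_convex_span_of_mem_convexHull hq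
  choose ρ hρV hρz using fun j => hzV (Set.mem_range_self j)
  obtain rfl : z = fun j i => (ρ j i : ℝ) := funext fun j => (hρz j).symm
  obtain ⟨y, rfl⟩ := hz.exists_comp_eq_of_sum_smul_eq (Rat.castHom ℝ) hw1 hwz
  simp only [Rat.coe_castHom, Function.comp_apply] at hw0 hw1 hwz
  have hq_eq : ∑ j, y j • ρ j = q := by
    ext i
    have hi := congrFun hwz i
    simp only [Finset.sum_apply, Pi.smul_apply, smul_eq_mul] at hi ⊢
    exact_mod_cast hi
  rw [← hq_eq]
  exact (convex_convexHull ℚ V).sum_mem (fun j _ => by exact_mod_cast (hw0 j).le)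
    (by exact_mod_cast hw1) fun j _ => subset_convexHull ℚ V (hρV j)

theorem Set.Finite.convexHull_extremePoints_convexHull {E : Type*} [AddCommGroup E] [Module ℝ E]
    [TopologicalSpace E] [T2Space E] [IsTopologicalAddGroup E] [ContinuousSMul ℝ E]
    [LocallyConvexSpace ℝ E] {s : Set E} (hs : s.Finite) :
    convexHull ℝ ((convexHull ℝ s).extremePoints ℝ) = convexHull ℝ s := by
  have hfin : ((convexHull ℝ s).extremePoints ℝ).Finite := hs.subset extremePoints_convexHull_subset
  rw [← (hfin.isClosed_convexHull (𝕜 := ℝ)).closure_eq]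
  exact closure_convexHull_extremePoints (hs.isCompact_convexHull ℝ) (convex_convexHull ℝ s)

def AddSubmonoid.ratCone {V : Type*} [AddCommGroup V] [Module ℚ V] (S : AddSubmonoid V) :
    ConvexCone ℚ V where
  carrier := {v | ∃ k : ℕ, 0 < k ∧ k • v ∈ S}
  smul_mem' := by
    rintro c hc v ⟨k, hk, hkv⟩
    refine ⟨k * c.den, by positivity, ?_⟩
    have hnum : ((c.num.toNat : ℕ) : ℚ) = c.den * c := by
      rw [Rat.den_mul_eq_num]; exact_mod_cast Int.toNat_of_nonneg (Rat.num_nonneg.2 hc.le)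
    convert nsmul_mem hkv c.num.toNat using 1
    simp only [← Nat.cast_smul_eq_nsmul ℚ, smul_smul, hnum]
    push_cast
    congr 1
    ring
  add_mem' := by
    rintro v ⟨k, hk, hkv⟩ w ⟨l, hl, hlw⟩
    refine ⟨k * l, by positivity, ?_⟩
    rw [smul_add, mul_comm, mul_smul, mul_comm, mul_smul]
    exact add_mem (nsmul_mem hkv l) (nsmul_mem hlw k)

theorem LinearMap.intCast_apply_eq_sum {ι R : Type*} [Fintype ι] [DecidableEq ι] [Ring R]
    (h : (ι → ℤ) →ₗ[ℤ] ℤ) (s : ι → ℤ) : (h s : R) = ∑ i, (s i : R) * h (Pi.single i 1) := by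
  conv_lhs => rw [← Finset.univ_sum_single s]
  rw [map_sum, Int.cast_sum]
  refine sum_congr rfl fun i _ => ?_
  rw [← Int.cast_mul, ← smul_eq_mul, ← map_smul, ← Pi.single_smul', smul_eq_mul, mul_one]

theorem LinearMap.eq_intCast_apply_of_mul_eq {ι : Type*} [Fintype ι] [DecidableEq ι]
    (h : (ι → ℤ) →ₗ[ℤ] ℤ) {p : ι → ℝ} (hp : ∑ i, p i * h (Pi.single i 1) = 1) {c : ℝ}
    {s : ι → ℤ} (hcs : ∀ i, c * p i = s i) : c = h s := by
  rw [h.intCast_apply_eq_sum, ← mul_one c, ← hp, mul_sum]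
  simp_rw [← hcs, mul_assoc]

theorem stmt5_general (n : ℕ) (h : (Fin n → ℤ) →ₗ[ℤ] ℤ)
    (S : AddSubmonoid (Fin n → ℤ))
    (Δ : Set (Fin n → ℝ))
    (hΔ : Δ = (closure {y : Fin n → ℝ | ∃ c : ℝ, 0 ≤ c ∧ ∃ x ∈ convexHull ℝ
            ((fun (m : Fin n → ℤ) (i : Fin n) => (m i : ℝ)) '' (S : Set (Fin n → ℤ))),
          y = c • x})
        ∩ {y : Fin n → ℝ | ∑ i, y i * (h (Pi.single i 1) : ℝ) = 1})
    (hpoly : ∃ W : Finset (Fin n → ℝ), Δ = convexHull ℝ (W : Set (Fin n → ℝ)))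
    (hlift : ∀ p ∈ Set.extremePoints ℝ Δ,
      ∃ c : ℝ, 0 < c ∧ ∃ s ∈ S, (fun i => c * p i) = fun i => ((s i : ℤ) : ℝ)) :
    (∀ p ∈ Set.extremePoints ℝ Δ, ∃ q : Fin n → ℚ, p = fun i => ((q i : ℚ) : ℝ)) ∧
    (∀ q : Fin n → ℚ, (fun i => ((q i : ℚ) : ℝ)) ∈ Δ →
      ∃ c : ℚ, 0 < c ∧ ∃ s ∈ S, ∀ i, c * q i = ((s i : ℤ) : ℚ)) := by
  have hvertex : ∀ p ∈ Δ.extremePoints ℝ, ∃ s ∈ S, 0 < h s ∧ ∀ i, (h s : ℝ) * p i = s i := by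
    intro p hp
    obtain ⟨c, hc, s, hs, hcps⟩ := hlift p hp
    have hcs (i : Fin n) : c * p i = s i := congrFun hcps i
    obtain rfl := h.eq_intCast_apply_of_mul_eq (hΔ ▸ hp.1).2 hcs
    exact ⟨s, hs, by exact_mod_cast hc, hcs⟩
  have hrat : ∀ p ∈ Δ.extremePoints ℝ, ∃ q : Fin n → ℚ, p = fun i => (q i : ℝ) := by
    intro p hp
    obtain ⟨s, -, hpos, hsp⟩ := hvertex p hp
    refine ⟨fun i => s i / h s, funext fun i => ?_⟩
    push_cast
    rw [eq_div_iff (by exact_mod_cast hpos.ne'), mul_comm]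
    exact hsp i
  refine ⟨hrat, fun q hq => ?_⟩
  let V : Set (Fin n → ℚ) := (fun v i => (v i : ℝ)) ⁻¹' Δ.extremePoints ℝ
  have hVcone : V ⊆ (S.map ((Int.castAddHom ℚ).compLeft (Fin n))).ratCone := by
    intro v hv
    obtain ⟨s, hs, hpos, hsv⟩ := hvertex _ hv
    obtain ⟨k, hk⟩ := Int.eq_ofNat_of_zero_le hpos.le
    refine ⟨k, by omega, s, hs, funext fun i => ?_⟩
    have hsv : (k : ℝ) * v i = s i := by simpa only [hk, Int.cast_natCast] using hsv i
    simp only [AddMonoidHom.compLeft_apply, Int.coe_castAddHom, Function.comp_apply,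
      Pi.smul_apply, nsmul_eq_mul]
    exact_mod_cast hsv.symm
  have hΔV : Δ = convexHull ℝ ((fun v i => (v i : ℝ)) '' V) := by
    rw [Set.image_preimage_eq_of_subset fun p hp => (hrat p hp).imp fun _ => Eq.symm]
    obtain ⟨W, rfl⟩ := hpoly
    exact W.finite_toSet.convexHull_extremePoints_convexHull.symm
  obtain ⟨k, hk, s, hs, hsq⟩ := convexHull_min hVcone (ConvexCone.convex _)
    (mem_convexHull_of_ratCast_mem_convexHull (hΔV ▸ hq))
  refine ⟨k, by exact_mod_cast hk, s, hs, fun i => ?_⟩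
  simpa using (congrFun hsq i).symm

theorem stmt5 (n : ℕ) (h : (Fin n → ℤ) →ₗ[ℤ] ℤ) (hsurj : Function.Surjective h)
    (S : AddSubmonoid (Fin n → ℤ))
    (hpos : ∀ s ∈ S, 0 ≤ h s) (hstrict : ∀ s ∈ S, h s = 0 → s = 0)
    (Δ : Set (Fin n → ℝ))
    (hΔ : Δ = (closure {y : Fin n → ℝ | ∃ c : ℝ, 0 ≤ c ∧ ∃ x ∈ convexHull ℝ
            ((fun (m : Fin n → ℤ) (i : Fin n) => (m i : ℝ)) '' (S : Set (Fin n → ℤ))),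
          y = c • x})
        ∩ {y : Fin n → ℝ | ∑ i, y i * (h (Pi.single i 1) : ℝ) = 1})
    (hpoly : ∃ W : Finset (Fin n → ℝ), Δ = convexHull ℝ (W : Set (Fin n → ℝ)))
    (hlift : ∀ p ∈ Set.extremePoints ℝ Δ,
      ∃ c : ℝ, 0 < c ∧ ∃ s ∈ S, (fun i => c * p i) = fun i => ((s i : ℤ) : ℝ)) :
    (∀ p ∈ Set.extremePoints ℝ Δ, ∃ q : Fin n → ℚ, p = fun i => ((q i : ℚ) : ℝ)) ∧
    (∀ q : Fin n → ℚ, (fun i => ((q i : ℚ) : ℝ)) ∈ Δ →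
      ∃ c : ℚ, 0 < c ∧ ∃ s ∈ S, ∀ i, c * q i = ((s i : ℤ) : ℚ)) :=
  stmt5_general n h S Δ hΔ hpoly hlift
end

section
/- Let S ⊆ M ≅ ℤⁿ be a strictly positive semigroup with respect to a height function h : M → ℤ, and assume its limit figure Δ_S is a polytope. Then S is finitely generated if and only if every vertex of Δ_S lifts to S. -/
/-!
If `S` is generated by a finite set `G`, every point of `Δ_S` lies in the convex hull `Q` of the
finitely many points `g / h g` (`g ∈ G`, `g ≠ 0`): the cone over `Q` contains `cone(S)`, and a
point of its closure at height one is, after rescaling to height one, a limit of points of the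
closed set `Q`. Hence the vertices of `Δ_S` are among these points and lift to `S`.

Conversely, let the vertices `v` lift to `w_v ∈ S`. For `s ∈ S`, the point `s / h s` lies in
`Δ_S = conv(vertices)`, so `s = ∑ θ_v w_v` with real `θ_v ≥ 0`, and `s - ∑ ⌊θ_v⌋ w_v` is a lattice
point in the fixed box `|x| ≤ ∑ |w_v|`. Thus `S` is covered by finitely many translates of the
monoid spanned by the `w_v`, and Dickson's lemma extracts finitely many generators.
-/

open Set

theorem Set.finite_setOf_minimal {α : Type*} [PartialOrder α] [WellQuasiOrderedLE α]
    (A : Set α) : {a | Minimal (· ∈ A) a}.Finite :=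
  (setOfPred_minimal_antichain _).finite_of_partiallyWellOrderedOn
    ((isPWO_of_wellQuasiOrderedLE A).mono (setOfPred_minimal_subset A))

theorem AddSubmonoid.fg_of_finite_translates {M J : Type*} [AddCommMonoid M] [Fintype J]
    {S : AddSubmonoid M} {w : J → M} (hw : ∀ j, w j ∈ S) {F : Set M} (hF : F.Finite)
    (hcover : ∀ s ∈ S, ∃ f ∈ F, ∃ a : J → ℕ, s = f + ∑ j, a j • w j) : S.FG := by
  let A (f : M) : Set (J → ℕ) := {a | f + ∑ j, a j • w j ∈ S}
  let gens := (⋃ f ∈ F, (fun b => f + ∑ j, b j • w j) '' {a | Minimal (· ∈ A f) a}) ∪ range w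
  have hgens : gens.Finite :=
    (hF.biUnion fun f _ => (finite_setOf_minimal _).image _).union (finite_range w)
  refine (AddSubmonoid.fg_iff S).2 ⟨gens, le_antisymm ?_ ?_, hgens⟩
  · refine closure_le.2 (union_subset (iUnion₂_subset fun f _ => ?_) (range_subset_iff.2 hw))
    rintro _ ⟨b, hb, rfl⟩
    exact hb.prop
  · intro s hs
    obtain ⟨f, hf, a, rfl⟩ := hcover s hs
    obtain ⟨b, hba, hb⟩ := (isPWO_of_wellQuasiOrderedLE (A f)).exists_le_minimal hs
    have hsplit : f + ∑ j, a j • w j = (f + ∑ j, b j • w j) + ∑ j, (a j - b j) • w j := by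
      rw [add_assoc, ← Finset.sum_add_distrib]
      congr 1
      refine Finset.sum_congr rfl fun j _ => ?_
      rw [← add_smul, Nat.add_sub_cancel' (hba j)]
    rw [hsplit]
    exact add_mem (AddSubmonoid.subset_closure (Or.inl (mem_biUnion hf ⟨b, hb, rfl⟩)))
      (AddSubmonoid.sum_mem _ fun j _ => AddSubmonoid.nsmul_mem _
        (AddSubmonoid.subset_closure (mem_union_right _ (mem_range_self j))) _)

section Cone

variable {E : Type*} [AddCommGroup E] [Module ℝ E] {Q : Set E}

def coneOver (Q : Set E) : Set E := {y | ∃ c : ℝ, 0 ≤ c ∧ ∃ x ∈ Q, y = c • x}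

theorem smul_mem_coneOver {c : ℝ} (hc : 0 ≤ c) {y : E} (hy : y ∈ coneOver Q) :
    c • y ∈ coneOver Q := by
  obtain ⟨t, ht, x, hx, rfl⟩ := hy
  exact ⟨c * t, mul_nonneg hc ht, x, hx, smul_smul c t x⟩

theorem zero_mem_coneOver (hQ : Q.Nonempty) : (0 : E) ∈ coneOver Q :=
  let ⟨x, hx⟩ := hQ
  ⟨0, le_rfl, x, hx, (zero_smul ℝ x).symm⟩

theorem coneOver_subset_coneOver {A : Set E} (hA : A ⊆ coneOver Q) : coneOver A ⊆ coneOver Q := by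
  rintro _ ⟨c, hc, x, hx, rfl⟩
  exact smul_mem_coneOver hc (hA hx)

theorem add_mem_coneOver (hQ : Convex ℝ Q) {y₁ y₂ : E} (h₁ : y₁ ∈ coneOver Q)
    (h₂ : y₂ ∈ coneOver Q) : y₁ + y₂ ∈ coneOver Q := by
  obtain ⟨c₁, hc₁, x₁, hx₁, rfl⟩ := h₁
  obtain ⟨c₂, hc₂, x₂, hx₂, rfl⟩ := h₂
  obtain ⟨x, hx, hsum⟩ := hQ.exists_mem_add_smul_eq hx₁ hx₂ hc₁ hc₂
  exact ⟨c₁ + c₂, add_nonneg hc₁ hc₂, x, hx, hsum.symm⟩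

theorem Convex.coneOver (hQ : Convex ℝ Q) : Convex ℝ (coneOver Q) :=
  fun _ hy₁ _ hy₂ _ _ ha hb _ =>
    add_mem_coneOver hQ (smul_mem_coneOver ha hy₁) (smul_mem_coneOver hb hy₂)

theorem mem_of_mem_closure_coneOver [TopologicalSpace E] [ContinuousSMul ℝ E] (f : E →L[ℝ] ℝ)
    (hQc : IsClosed Q) (hQ1 : ∀ x ∈ Q, f x = 1) {p : E} (hp : p ∈ closure (coneOver Q))
    (hfp : f p = 1) : p ∈ Q := by
  set φ : E → E := fun y => (f y)⁻¹ • y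
  have hφp : φ p = p := by simp [φ, hfp]
  have hφ : ContinuousAt φ p :=
    ((f.continuous.continuousAt.inv₀ (by simp [hfp])).smul continuousAt_id)
  have hpU : p ∈ closure ({y | 0 < f y} ∩ coneOver Q) :=
    (isOpen_lt continuous_const f.continuous).inter_closure ⟨by simp [hfp], hp⟩
  have hφQ : φ '' ({y | 0 < f y} ∩ coneOver Q) ⊆ Q := by
    rintro _ ⟨_, ⟨hpos, c, -, x, hx, rfl⟩, rfl⟩
    have hfc : f (c • x) = c := by simp [hQ1 x hx]
    rw [mem_ofPred_eq, hfc] at hpos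
    simpa [φ, hfc, hpos.ne'] using hx
  simpa [hφp] using hQc.closure_subset_iff.2 hφQ (mem_closure_image hφ hpU)

end Cone

theorem convexHull_extremePoints_convexHull {E : Type*} [NormedAddCommGroup E] [NormedSpace ℝ E]
    {W : Set E} (hW : W.Finite) :
    convexHull ℝ ((convexHull ℝ W).extremePoints ℝ) = convexHull ℝ W := by
  have hfin : ((convexHull ℝ W).extremePoints ℝ).Finite :=
    hW.subset extremePoints_convexHull_subset
  rw [← (hfin.isCompact_convexHull ℝ).isClosed.closure_eq]
  exact closure_convexHull_extremePoints (hW.isCompact_convexHull ℝ) (convex_convexHull ℝ W)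

theorem exists_nonneg_coeffs_of_mem_convexHull {E : Type*} [AddCommGroup E] [Module ℝ E]
    {V : Finset E} {r : V → ℝ} {u : V → E} (hr : ∀ v, 0 < r v) (hu : ∀ v, r v • (v : E) = u v)
    {t : ℝ} (ht : 0 ≤ t) {x : E} (hx : x ∈ convexHull ℝ (V : Set E)) :
    ∃ θ : V → ℝ, (∀ v, 0 ≤ θ v) ∧ t • x = ∑ v, θ v • u v := by
  obtain ⟨μ, hμ, -, rfl⟩ := Finset.mem_convexHull'.1 hx
  refine ⟨fun v => t * μ v / r v, fun v => by have := hμ v v.2; have := hr v; positivity, ?_⟩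
  rw [← Finset.sum_coe_sort V, Finset.smul_sum]
  refine Finset.sum_congr rfl fun v _ => ?_
  rw [← hu, smul_smul, smul_smul, div_mul_cancel₀ _ (hr v).ne']

def toRealVec {κ : Type*} : (κ → ℤ) →+ (κ → ℝ) := (Int.castAddHom ℝ).compLeft κ

@[simp] theorem toRealVec_apply {κ : Type*} (m : κ → ℤ) (i : κ) : toRealVec m i = m i := rfl

theorem sub_sum_floor_smul_mem_Icc {κ J : Type*} [Fintype J] {s : κ → ℤ} {w : J → κ → ℤ}
    {θ : J → ℝ} (hθ : ∀ j, 0 ≤ θ j) (hs : toRealVec s = ∑ j, θ j • toRealVec (w j)) :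
    s - ∑ j, ⌊θ j⌋₊ • w j ∈ Icc (-∑ j, |w j|) (∑ j, |w j|) := by
  suffices h : ∀ i, |(s - ∑ j, ⌊θ j⌋₊ • w j) i| ≤ ∑ j, |w j i| by
    refine ⟨fun i => ?_, fun i => ?_⟩
    · simpa [Finset.sum_apply] using (abs_le.1 (h i)).1
    · simpa [Finset.sum_apply] using (abs_le.1 (h i)).2
  intro i
  have hreal : (((s - ∑ j, ⌊θ j⌋₊ • w j) i : ℤ) : ℝ) = ∑ j, (θ j - ⌊θ j⌋₊) * w j i := by
    have hsi := congrFun hs i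
    simp only [toRealVec_apply, Finset.sum_apply, Pi.smul_apply, smul_eq_mul] at hsi
    simp [Finset.sum_apply, hsi, sub_mul, Finset.sum_sub_distrib]
  have hfrac : ∀ j, |θ j - ⌊θ j⌋₊| ≤ 1 := fun j =>
    abs_le.2 ⟨by linarith [Nat.floor_le (hθ j)], by linarith [Nat.lt_floor_add_one (θ j)]⟩
  have : |(((s - ∑ j, ⌊θ j⌋₊ • w j) i : ℤ) : ℝ)| ≤ ∑ j, |(w j i : ℝ)| := by
    rw [hreal]
    refine (Finset.abs_sum_le_sum_abs _ _).trans (Finset.sum_le_sum fun j _ => ?_)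
    rw [abs_mul]
    exact mul_le_of_le_one_left (abs_nonneg _) (hfrac j)
  exact_mod_cast this

section Height

variable {κ : Type*} {h : (κ → ℤ) →ₗ[ℤ] ℤ} {S : AddSubmonoid (κ → ℤ)} {p : κ → ℝ}

variable (h) in
noncomputable def radialProj (m : κ → ℤ) : κ → ℝ := (h m : ℝ)⁻¹ • toRealVec m

theorem smul_radialProj {m : κ → ℤ} (hm : h m ≠ 0) : (h m : ℝ) • radialProj h m = toRealVec m :=
  smul_inv_smul₀ (Int.cast_ne_zero.2 hm) _

variable (S) in
def LiftsTo (p : κ → ℝ) : Prop := ∃ c : ℝ, 0 < c ∧ ∃ s ∈ S, c • p = toRealVec s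

variable [Fintype κ] [DecidableEq κ]

variable (h) in
noncomputable def realHeight : (κ → ℝ) →L[ℝ] ℝ :=
  LinearMap.toContinuousLinearMap
    { toFun := fun y => ∑ i, y i * (h (Pi.single i 1) : ℝ)
      map_add' := fun x y => by simp [add_mul, Finset.sum_add_distrib]
      map_smul' := fun a x => by simp [Finset.mul_sum, mul_assoc] }

theorem realHeight_apply (y : κ → ℝ) : realHeight h y = ∑ i, y i * (h (Pi.single i 1) : ℝ) :=
  rfl

@[simp] theorem realHeight_toRealVec (m : κ → ℤ) : realHeight h (toRealVec m) = h m := by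
  have hsingle (i : κ) : h (Pi.single i (m i)) = m i * h (Pi.single i 1) := by
    rw [← smul_eq_mul, ← map_smul, ← Pi.single_smul', smul_eq_mul, mul_one]
  conv_rhs => rw [← Finset.univ_sum_single m, map_sum]
  simp [realHeight_apply, hsingle]

variable (h S) in
def limitFigure : Set (κ → ℝ) :=
  closure (coneOver (convexHull ℝ (toRealVec '' (S : Set (κ → ℤ))))) ∩
    {y | realHeight h y = 1}

theorem realHeight_radialProj {m : κ → ℤ} (hm : h m ≠ 0) : realHeight h (radialProj h m) = 1 := by
  simp [radialProj, Int.cast_ne_zero.2 hm]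

theorem radialProj_mem_limitFigure {s : κ → ℤ} (hs : s ∈ S) (hpos : 0 < h s) :
    radialProj h s ∈ limitFigure h S :=
  ⟨subset_closure ⟨_, by positivity, _, subset_convexHull ℝ _ (mem_image_of_mem _ hs), rfl⟩,
    realHeight_radialProj hpos.ne'⟩

theorem convex_limitFigure : Convex ℝ (limitFigure h S) :=
  (convex_convexHull ℝ _).coneOver.closure.inter
    (convex_hyperplane (realHeight h).toLinearMap.isLinear 1)

theorem liftsTo_iff_exists_radialProj_eq (hp : realHeight h p = 1) :
    LiftsTo S p ↔ ∃ s ∈ S, 0 < h s ∧ radialProj h s = p := by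
  constructor
  · rintro ⟨c, hc, s, hs, hcs⟩
    have hch : c = h s := by simpa [hp] using congrArg (realHeight h) hcs
    have hpos : 0 < h s := by exact_mod_cast hch ▸ hc
    refine ⟨s, hs, hpos, ?_⟩
    rw [radialProj, ← hcs, ← hch, inv_smul_smul₀ hc.ne']
  · rintro ⟨s, hs, hpos, rfl⟩
    exact ⟨h s, by exact_mod_cast hpos, s, hs, smul_radialProj hpos.ne'⟩

theorem exists_ne_zero_of_mem_limitFigure (hp : p ∈ limitFigure h S) : ∃ s ∈ S, s ≠ 0 := by
  by_contra! hS
  have himage : toRealVec '' (S : Set (κ → ℤ)) ⊆ {0} := by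
    rintro _ ⟨s, hs, rfl⟩
    simp [hS s hs]
  have hcone : coneOver (convexHull ℝ (toRealVec '' (S : Set (κ → ℤ)))) ⊆ {0} := by
    rintro _ ⟨c, -, x, hx, rfl⟩
    rw [mem_singleton_iff.1 (convexHull_min himage (convex_singleton 0) hx), smul_zero]
    rfl
  have hp0 : p = 0 := closure_minimal hcone isClosed_singleton hp.1
  simpa [hp0] using hp.2

theorem exists_radialProj_eq_of_mem_extremePoints (hS : ∀ s ∈ S, s ≠ 0 → 0 < h s)
    {T : Set (κ → ℤ)} (hT : T.Finite) (hTS : AddSubmonoid.closure T = S)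
    (hT0 : ∃ t ∈ T, t ≠ 0) (hp : p ∈ (limitFigure h S).extremePoints ℝ) :
    ∃ s ∈ S, 0 < h s ∧ radialProj h s = p := by
  have hTS' : ∀ t ∈ T, t ∈ S := fun t ht => hTS ▸ AddSubmonoid.subset_closure ht
  set P := radialProj h '' {t ∈ T | t ≠ 0}
  set Q := convexHull ℝ P
  have hPΔ : P ⊆ limitFigure h S := by
    rintro _ ⟨t, ⟨ht, ht0⟩, rfl⟩
    exact radialProj_mem_limitFigure (hTS' t ht) (hS t (hTS' t ht) ht0)
  have hQc : IsClosed Q :=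
    (((hT.subset (sep_subset _ _)).image _).isCompact_convexHull ℝ).isClosed
  have hQ1 : ∀ x ∈ Q, realHeight h x = 1 := fun x hx =>
    convexHull_min (fun _ hy => (hPΔ hy).2)
      (convex_hyperplane (realHeight h).toLinearMap.isLinear 1) hx
  have hQne : Q.Nonempty :=
    let ⟨t, ht, ht0⟩ := hT0
    ⟨_, subset_convexHull ℝ P ⟨t, ⟨ht, ht0⟩, rfl⟩⟩
  have hSQ : toRealVec '' (S : Set (κ → ℤ)) ⊆ coneOver Q := by
    rintro _ ⟨s, hs, rfl⟩
    rw [SetLike.mem_coe, ← hTS] at hs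
    induction hs using AddSubmonoid.closure_induction with
    | mem t ht =>
      by_cases ht0 : t = 0
      · simpa [ht0] using zero_mem_coneOver hQne
      · have hpos := hS t (hTS' t ht) ht0
        exact ⟨h t, by exact_mod_cast hpos.le, _, subset_convexHull ℝ P ⟨t, ⟨ht, ht0⟩, rfl⟩,
          (smul_radialProj hpos.ne').symm⟩
    | zero => simpa using zero_mem_coneOver hQne
    | add x y _ _ hx hy => simpa using add_mem_coneOver (convex_convexHull ℝ P) hx hy
  have hpQ : p ∈ Q := mem_of_mem_closure_coneOver (realHeight h) hQc hQ1
    (closure_mono (coneOver_subset_coneOver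
      (convexHull_min hSQ (convex_convexHull ℝ P).coneOver)) hp.1.1) hp.1.2
  obtain ⟨t, ⟨ht, ht0⟩, rfl⟩ : p ∈ P := extremePoints_convexHull_subset
    (inter_extremePoints_subset_extremePoints_of_subset
      (convexHull_min hPΔ convex_limitFigure) ⟨hpQ, hp⟩)
  exact ⟨t, hTS' t ht, hS t (hTS' t ht) ht0, rfl⟩

theorem liftsTo_of_fg (hS : ∀ s ∈ S, s ≠ 0 → 0 < h s) (hfg : S.FG)
    (hp : p ∈ (limitFigure h S).extremePoints ℝ) : LiftsTo S p := by
  obtain ⟨G, hG⟩ := hfg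
  obtain ⟨s₀, hs₀, hs₀0⟩ := exists_ne_zero_of_mem_limitFigure (extremePoints_subset hp)
  -- adjoining `s₀ ≠ 0` keeps the generators' hull at height one nonempty
  have hcl : AddSubmonoid.closure (insert s₀ (G : Set (κ → ℤ))) = S :=
    le_antisymm (AddSubmonoid.closure_le.2 (insert_subset hs₀ (hG ▸ AddSubmonoid.subset_closure)))
      (hG ▸ AddSubmonoid.closure_mono (subset_insert _ _))
  exact (liftsTo_iff_exists_radialProj_eq (extremePoints_subset hp).2).2
    (exists_radialProj_eq_of_mem_extremePoints hS (G.finite_toSet.insert s₀) hcl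
      ⟨s₀, mem_insert _ _, hs₀0⟩ hp)

theorem fg_of_forall_liftsTo (hS : ∀ s ∈ S, s ≠ 0 → 0 < h s)
    (hpoly : ∃ W : Finset (κ → ℝ), limitFigure h S = convexHull ℝ ↑W)
    (hlift : ∀ p ∈ (limitFigure h S).extremePoints ℝ, LiftsTo S p) : S.FG := by
  obtain ⟨W, hW⟩ := hpoly
  have hVfin : ((limitFigure h S).extremePoints ℝ).Finite :=
    W.finite_toSet.subset (hW ▸ extremePoints_convexHull_subset)
  set V := hVfin.toFinset
  have hΔV : limitFigure h S = convexHull ℝ ↑V := by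
    rw [hVfin.coe_toFinset, hW, convexHull_extremePoints_convexHull W.finite_toSet]
  have hV (v : V) : ∃ s ∈ S, 0 < h s ∧ radialProj h s = v := by
    have hv := hVfin.mem_toFinset.1 v.2
    exact (liftsTo_iff_exists_radialProj_eq (extremePoints_subset hv).2).1 (hlift v hv)
  choose w hwS hwpos hwv using hV
  have hB : 0 ≤ ∑ v, |w v| := Finset.sum_nonneg fun v _ => abs_nonneg _
  refine AddSubmonoid.fg_of_finite_translates hwS (finite_Icc (-∑ v, |w v|) (∑ v, |w v|))
    fun s hs => ?_
  rcases eq_or_ne s 0 with rfl | hs0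
  · exact ⟨0, ⟨neg_nonpos.2 hB, hB⟩, 0, by simp⟩
  have hpos := hS s hs hs0
  obtain ⟨θ, hθ, hsθ⟩ := exists_nonneg_coeffs_of_mem_convexHull
    (fun v => (Int.cast_pos.2 (hwpos v) : (0 : ℝ) < h (w v)))
    (fun v => by rw [← hwv v, smul_radialProj (hwpos v).ne']) (Int.cast_nonneg hpos.le)
    (hΔV ▸ radialProj_mem_limitFigure hs hpos)
  rw [smul_radialProj hpos.ne'] at hsθ
  exact ⟨_, sub_sum_floor_smul_mem_Icc hθ hsθ, fun v => ⌊θ v⌋₊, (sub_add_cancel _ _).symm⟩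

theorem fg_iff_forall_extremePoints_liftsTo (hS : ∀ s ∈ S, s ≠ 0 → 0 < h s)
    (hpoly : ∃ W : Finset (κ → ℝ), limitFigure h S = convexHull ℝ ↑W) :
    S.FG ↔ ∀ p ∈ (limitFigure h S).extremePoints ℝ, LiftsTo S p :=
  ⟨fun hfg _ hp => liftsTo_of_fg hS hfg hp, fg_of_forall_liftsTo hS hpoly⟩

end Height

theorem stmt6_general (n : ℕ) (h : (Fin n → ℤ) →ₗ[ℤ] ℤ)
    (S : AddSubmonoid (Fin n → ℤ))
    (hpos : ∀ s ∈ S, 0 ≤ h s) (hstrict : ∀ s ∈ S, h s = 0 → s = 0)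
    (Δ : Set (Fin n → ℝ))
    (hΔ : Δ = (closure {y : Fin n → ℝ | ∃ c : ℝ, 0 ≤ c ∧ ∃ x ∈ convexHull ℝ
            ((fun (m : Fin n → ℤ) (i : Fin n) => (m i : ℝ)) '' (S : Set (Fin n → ℤ))),
          y = c • x})
        ∩ {y : Fin n → ℝ | ∑ i, y i * (h (Pi.single i 1) : ℝ) = 1})
    (hpoly : ∃ W : Finset (Fin n → ℝ), Δ = convexHull ℝ (W : Set (Fin n → ℝ))) :
    S.FG ↔ ∀ p ∈ Set.extremePoints ℝ Δ,
      ∃ c : ℝ, 0 < c ∧ ∃ s ∈ S, (fun i => c * p i) = fun i => ((s i : ℤ) : ℝ) := by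
  have hS : ∀ s ∈ S, s ≠ 0 → 0 < h s := fun s hs hs0 =>
    (hpos s hs).lt_of_ne fun h0 => hs0 (hstrict s hs h0.symm)
  obtain rfl : Δ = limitFigure h S := hΔ
  exact fg_iff_forall_extremePoints_liftsTo hS hpoly

theorem stmt6 (n : ℕ) (h : (Fin n → ℤ) →ₗ[ℤ] ℤ) (hsurj : Function.Surjective h)
    (S : AddSubmonoid (Fin n → ℤ))
    (hpos : ∀ s ∈ S, 0 ≤ h s) (hstrict : ∀ s ∈ S, h s = 0 → s = 0)
    (Δ : Set (Fin n → ℝ))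
    (hΔ : Δ = (closure {y : Fin n → ℝ | ∃ c : ℝ, 0 ≤ c ∧ ∃ x ∈ convexHull ℝ
            ((fun (m : Fin n → ℤ) (i : Fin n) => (m i : ℝ)) '' (S : Set (Fin n → ℤ))),
          y = c • x})
        ∩ {y : Fin n → ℝ | ∑ i, y i * (h (Pi.single i 1) : ℝ) = 1})
    (hpoly : ∃ W : Finset (Fin n → ℝ), Δ = convexHull ℝ (W : Set (Fin n → ℝ))) :
    S.FG ↔ ∀ p ∈ Set.extremePoints ℝ Δ,
      ∃ c : ℝ, 0 < c ∧ ∃ s ∈ S, (fun i => c * p i) = fun i => ((s i : ℤ) : ℝ) :=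
  stmt6_general n h S hpos hstrict Δ hΔ hpoly
end

section
/- Let σ ⊆ N_ℝ ≅ ℝ² be a full-dimensional strongly convex rational polyhedral cone and v ∈ int(σ) ∩ N a lattice point. Then v is strongly decomposable in σ (i.e., v = v' + v'' with v', v'' ∈ int(σ) ∩ N) if and only if 1 is not a value of ⟨·, v⟩ on the Hilbert basis of the dual cone σ^∨ ⊆ M. -/
/-!
For `det a b > 0` the interior lattice points of `σ = cone(a, b)` are the `w` with `det a w > 0`
and `det w b > 0`. A nonzero `m ∈ σ^∨ ∩ M` is positive on `int σ`, so it is `≥ 2` on a strongly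
decomposable `v`, and any such `m` with `⟨m, v⟩ = 1` is automatically in the Hilbert basis.

Conversely, suppose no nonzero `m ∈ σ^∨ ∩ M` has `⟨m, v⟩ = 1`. If `v = g v₀` with `g ≥ 2`, then
`v = v₀ + (g - 1) v₀`. If `v` is primitive, pick `u` with `det v u = 1`. For every `k` the
covector `det · (u - k v)` takes the value 1 at `v`, hence is not in `σ^∨`; by the Plücker
relation this forces `det a (u - k v)` and `det (u - k v) b` to have the same strict sign. Both
are decreasing in `k`, so the last `k` at which the first is positive makes `w = u - k v` and
`v - w` interior.
-/

noncomputable section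

/-- Embedding of the lattice `ℤ²` into `ℝ²`. -/
def toR (p : ℤ × ℤ) : ℝ × ℝ := ((p.1 : ℝ), (p.2 : ℝ))

/-- Real pairing of a real point with a lattice functional. -/
def pairR (x : ℝ × ℝ) (u : ℤ × ℤ) : ℝ := x.1 * u.1 + x.2 * u.2

/-- Integral pairing `⟨m, v⟩`. -/
def pairZ (m v : ℤ × ℤ) : ℤ := m.1 * v.1 + m.2 * v.2

/-- The rational polyhedral cone in `ℝ²` generated by two lattice vectors. -/
def cone2 (a b : ℤ × ℤ) : Set (ℝ × ℝ) :=
  {x | ∃ c d : ℝ, 0 ≤ c ∧ 0 ≤ d ∧ x = c • toR a + d • toR b}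

/-- The lattice points of the dual cone `σ^∨ ∩ M`. -/
def dualLat (σ : Set (ℝ × ℝ)) : Set (ℤ × ℤ) := {m | ∀ x ∈ σ, 0 ≤ pairR x m}

/-- The Hilbert basis of `σ^∨`: the indecomposable nonzero elements of the
semigroup `σ^∨ ∩ M`. -/
def hilb (σ : Set (ℝ × ℝ)) : Set (ℤ × ℤ) :=
  {m ∈ dualLat σ | m ≠ 0 ∧
    ¬ ∃ m' ∈ dualLat σ, ∃ m'' ∈ dualLat σ, m' ≠ 0 ∧ m'' ≠ 0 ∧ m = m' + m''}

/-- `v` is strongly decomposable in `σ` if it is the sum of two interior lattice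
points of `σ`. -/
def StronglyDecomposable (σ : Set (ℝ × ℝ)) (v : ℤ × ℤ) : Prop :=
  ∃ v' v'' : ℤ × ℤ, toR v' ∈ interior σ ∧ toR v'' ∈ interior σ ∧ v = v' + v''

lemma pairR_toR (m w : ℤ × ℤ) : pairR (toR w) m = pairZ m w := by
  simp only [pairR, toR, pairZ]
  push_cast
  ring

lemma pairZ_add_right (m v w : ℤ × ℤ) : pairZ m (v + w) = pairZ m v + pairZ m w := by
  simp only [pairZ, Prod.fst_add, Prod.snd_add]
  ring

lemma pairZ_add_left (m n v : ℤ × ℤ) : pairZ (m + n) v = pairZ m v + pairZ n v := by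
  simp only [pairZ, Prod.fst_add, Prod.snd_add]
  ring

lemma ne_zero_of_pairZ_ne_zero {m x : ℤ × ℤ} (h : pairZ m x ≠ 0) : m ≠ 0 := by
  rintro rfl
  simp [pairZ] at h

lemma ContinuousLinearMap.pos_of_mem_interior {E : Type*} [AddCommGroup E] [TopologicalSpace E]
    [ContinuousAdd E] [Module ℝ E] [ContinuousSMul ℝ E] {f : StrongDual ℝ E} (hf : f ≠ 0)
    {s : Set E} (hs : ∀ x ∈ s, 0 ≤ f x) {x : E} (hx : x ∈ interior s) : 0 < f x := by
  rw [← Set.mem_Ioi, ← interior_Ici]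
  exact interior_mono (Set.image_subset_iff.2 hs)
    ((f.isOpenMap_of_ne_zero hf).image_interior_subset s ⟨x, hx, rfl⟩)

def pairingCLM (m : ℤ × ℤ) : StrongDual ℝ (ℝ × ℝ) :=
  (m.1 : ℝ) • ContinuousLinearMap.fst ℝ ℝ ℝ + (m.2 : ℝ) • ContinuousLinearMap.snd ℝ ℝ ℝ

lemma pairingCLM_apply (m : ℤ × ℤ) (x : ℝ × ℝ) : pairingCLM m x = pairR x m := by
  simp [pairingCLM, pairR, mul_comm]

lemma pairingCLM_ne_zero {m : ℤ × ℤ} (hm : m ≠ 0) : pairingCLM m ≠ 0 := by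
  intro h
  have h1 := pairingCLM_apply m (1, 0)
  have h2 := pairingCLM_apply m (0, 1)
  simp [h, pairR] at h1 h2
  exact hm (Prod.ext (by exact_mod_cast h1.symm) (by exact_mod_cast h2.symm))

section AnyCone

variable {σ : Set (ℝ × ℝ)}

lemma pairZ_pos_of_mem_interior {m w : ℤ × ℤ} (hm : m ∈ dualLat σ) (hm0 : m ≠ 0)
    (hw : toR w ∈ interior σ) : 0 < pairZ m w := by
  have := ContinuousLinearMap.pos_of_mem_interior (pairingCLM_ne_zero hm0)
    (fun x hx => (pairingCLM_apply m x).symm ▸ hm x hx) hw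
  rwa [pairingCLM_apply, pairR_toR, Int.cast_pos] at this

lemma two_le_pairZ_of_stronglyDecomposable {v m : ℤ × ℤ} (hv : StronglyDecomposable σ v)
    (hm : m ∈ dualLat σ) (hm0 : m ≠ 0) : 2 ≤ pairZ m v := by
  obtain ⟨v', v'', h', h'', rfl⟩ := hv
  have := pairZ_pos_of_mem_interior hm hm0 h'
  have := pairZ_pos_of_mem_interior hm hm0 h''
  rw [pairZ_add_right]
  omega

lemma exists_mem_hilb_pairZ_eq_one_iff {v : ℤ × ℤ} (hv : toR v ∈ interior σ) :
    (∃ m ∈ hilb σ, pairZ m v = 1) ↔ ∃ m ∈ dualLat σ, m ≠ 0 ∧ pairZ m v = 1 := by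
  refine ⟨fun ⟨m, ⟨hm, hm0, _⟩, hmv⟩ => ⟨m, hm, hm0, hmv⟩,
    fun ⟨m, hm, hm0, hmv⟩ => ⟨m, ⟨hm, hm0, ?_⟩, hmv⟩⟩
  rintro ⟨m', hm', m'', hm'', hm'0, hm''0, rfl⟩
  have := pairZ_pos_of_mem_interior hm' hm'0 hv
  have := pairZ_pos_of_mem_interior hm'' hm''0 hv
  rw [pairZ_add_left] at hmv
  omega

end AnyCone

def det (x y : ℤ × ℤ) : ℤ := x.1 * y.2 - x.2 * y.1

lemma det_ne_zero_of_linearIndependent {a b : ℤ × ℤ}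
    (hind : LinearIndependent ℝ ![toR a, toR b]) : det a b ≠ 0 := by
  rw [LinearIndependent.pair_iff] at hind
  intro hdet
  have hdetR : (a.1 : ℝ) * b.2 - a.2 * b.1 = 0 := by exact_mod_cast hdet
  have h₂ := hind b.2 (-a.2) (Prod.ext (by simp [toR]; linarith) (by simp [toR]; ring))
  have h₁ := hind b.1 (-a.1) (Prod.ext (by simp [toR]; ring) (by simp [toR]; linarith))
  have ha : toR a = 0 := Prod.ext (neg_eq_zero.1 h₁.2) (neg_eq_zero.1 h₂.2)
  exact one_ne_zero (hind 1 0 (by simp [ha])).1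

lemma det_self (x : ℤ × ℤ) : det x x = 0 := by
  simp only [det]
  ring

lemma det_swap (x y : ℤ × ℤ) : det y x = -det x y := by
  simp only [det]
  ring

lemma det_sub_right (a v w : ℤ × ℤ) : det a (v - w) = det a v - det a w := by
  simp only [det, Prod.fst_sub, Prod.snd_sub]
  ring

lemma det_sub_left (v w b : ℤ × ℤ) : det (v - w) b = det v b - det w b := by
  simp only [det, Prod.fst_sub, Prod.snd_sub]
  ring

lemma det_sub_smul_right (a u v : ℤ × ℤ) (k : ℤ) : det a (u - k • v) = det a u - k * det a v := by
  simp only [det, Prod.fst_sub, Prod.snd_sub, Prod.smul_fst, Prod.smul_snd, smul_eq_mul]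
  ring

lemma det_sub_smul_left (u v b : ℤ × ℤ) (k : ℤ) : det (u - k • v) b = det u b - k * det v b := by
  simp only [det, Prod.fst_sub, Prod.snd_sub, Prod.smul_fst, Prod.smul_snd, smul_eq_mul]
  ring

lemma det_mul_det (a b v w : ℤ × ℤ) :
    det a b * det v w = det a w * det v b - det a v * det w b := by
  simp only [det]
  ring

lemma cone2_comm (a b : ℤ × ℤ) : cone2 a b = cone2 b a := by
  ext x
  constructor <;> rintro ⟨c, d, hc, hd, rfl⟩ <;> exact ⟨d, c, hd, hc, add_comm _ _⟩

lemma pairR_add_smul (m a b : ℤ × ℤ) (c d : ℝ) :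
    pairR (c • toR a + d • toR b) m = c * pairZ m a + d * pairZ m b := by
  simp only [pairR, pairZ, toR, Prod.fst_add, Prod.snd_add, Prod.smul_fst, Prod.smul_snd,
    smul_eq_mul]
  push_cast
  ring

lemma mem_dualLat_cone2_iff {a b m : ℤ × ℤ} :
    m ∈ dualLat (cone2 a b) ↔ 0 ≤ pairZ m a ∧ 0 ≤ pairZ m b := by
  constructor
  · intro hm
    have ha := hm (toR a) ⟨1, 0, zero_le_one, le_rfl, by simp⟩
    have hb := hm (toR b) ⟨0, 1, le_rfl, zero_le_one, by simp⟩
    rw [pairR_toR] at ha hb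
    exact ⟨by exact_mod_cast ha, by exact_mod_cast hb⟩
  · rintro ⟨ha, hb⟩ x ⟨c, d, hc, hd, rfl⟩
    rw [pairR_add_smul]
    have : (0 : ℝ) ≤ pairZ m a := by exact_mod_cast ha
    have : (0 : ℝ) ≤ pairZ m b := by exact_mod_cast hb
    positivity

lemma toR_mem_interior_cone2_iff {a b w : ℤ × ℤ} (hD : 0 < det a b) :
    toR w ∈ interior (cone2 a b) ↔ 0 < det a w ∧ 0 < det w b := by
  set ma : ℤ × ℤ := (-a.2, a.1)
  set mb : ℤ × ℤ := (b.2, -b.1)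
  have ha : ∀ x, pairZ ma x = det a x := fun x => by simp only [ma, pairZ, det]; ring
  have hb : ∀ x, pairZ mb x = det x b := fun x => by simp only [mb, pairZ, det]; ring
  constructor
  · intro hw
    have hma : ma ∈ dualLat (cone2 a b) := by
      rw [mem_dualLat_cone2_iff, ha, ha, det_self]
      exact ⟨le_rfl, hD.le⟩
    have hmb : mb ∈ dualLat (cone2 a b) := by
      rw [mem_dualLat_cone2_iff, hb, hb, det_self]
      exact ⟨hD.le, le_rfl⟩
    rw [← ha, ← hb]
    exact ⟨pairZ_pos_of_mem_interior hma (ne_zero_of_pairZ_ne_zero (ha b ▸ hD.ne')) hw,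
      pairZ_pos_of_mem_interior hmb (ne_zero_of_pairZ_ne_zero (hb a ▸ hD.ne')) hw⟩
  · rintro ⟨hwa, hwb⟩
    have hDR : (0 : ℝ) < det a b := by exact_mod_cast hD
    have hsub : {x | 0 < pairingCLM ma x ∧ 0 < pairingCLM mb x} ⊆ cone2 a b := by
      rintro x ⟨hxa, hxb⟩
      rw [pairingCLM_apply] at hxa hxb
      refine ⟨pairR x mb / det a b, pairR x ma / det a b, by positivity, by positivity, ?_⟩
      have hcramer : (det a b : ℝ) • x = pairR x mb • toR a + pairR x ma • toR b := by
        ext <;> simp [pairR, det, toR, ma, mb] <;> ring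
      rw [div_eq_inv_mul, div_eq_inv_mul, mul_smul, mul_smul, ← smul_add, ← hcramer, smul_smul,
        inv_mul_cancel₀ hDR.ne', one_smul]
    have hopen : IsOpen {x | 0 < pairingCLM ma x ∧ 0 < pairingCLM mb x} :=
      (isOpen_lt continuous_const (map_continuous _)).and
        (isOpen_lt continuous_const (map_continuous _))
    refine interior_maximal hsub hopen ⟨?_, ?_⟩
    · rw [pairingCLM_apply, pairR_toR, ha]
      exact_mod_cast hwa
    · rw [pairingCLM_apply, pairR_toR, hb]
      exact_mod_cast hwb

lemma det_nonneg_and_det_nonpos_of_det_eq_one {a b v w : ℤ × ℤ} (hD : 0 < det a b)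
    (hav : 0 < det a v) (hvb : 0 < det v b) (hvw : det v w = 1)
    (hle : det a w * det w b ≤ 0) : 0 ≤ det a w ∧ det w b ≤ 0 := by
  -- the Plücker relation excludes `det a w ≤ 0 ≤ det w b`
  have hplucker := det_mul_det a b v w
  rw [hvw, mul_one] at hplucker
  rcases le_or_gt 0 (det a w) with hwa | hwa <;> rcases le_or_gt (det w b) 0 with hwb | hwb
  · exact ⟨hwa, hwb⟩
  · have haw : det a w = 0 := le_antisymm (nonpos_of_mul_nonpos_left hle hwb) hwa
    nlinarith [mul_pos hav hwb]
  · have hwb' : det w b = 0 := le_antisymm hwb (nonneg_of_mul_nonpos_right hle hwa)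
    nlinarith [mul_neg_of_neg_of_pos hwa hvb]
  · nlinarith [mul_neg_of_neg_of_pos hwa hvb, mul_pos hav hwb]

lemma exists_sub_mul_mem_Ioo {x p y r : ℤ} (hp : 0 < p)
    (h : ∀ k : ℤ, 0 < (x - k * p) * (y - k * r)) :
    ∃ k : ℤ, 0 < x - k * p ∧ x - k * p < p ∧ 0 < y - k * r ∧ y - k * r < r := by
  -- `k` is the last index at which `x - k * p` is still positive
  set k := (x - 1) / p
  have hdiv := Int.mul_ediv_add_emod (x - 1) p
  have h0 := Int.emod_nonneg (x - 1) hp.ne'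
  have hlt := Int.emod_lt_of_pos (x - 1) hp
  have hxk : 0 < x - k * p := by linarith
  have hxk1 : x - (k + 1) * p ≤ 0 := by linarith
  have hyk := (pos_and_pos_or_neg_and_neg_of_mul_pos (h k)).resolve_right (by omega)
  have hyk1 := (pos_and_pos_or_neg_and_neg_of_mul_pos (h (k + 1))).resolve_left (by omega)
  exact ⟨k, hxk, by linarith [hyk1.1], hyk.2, by linarith [hyk1.2]⟩

lemma exists_det_mem_Ioo_of_gcd_ne_one {a b v : ℤ × ℤ} (hav : 0 < det a v) (hvb : 0 < det v b)
    (hg : Int.gcd v.1 v.2 ≠ 1) :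
    ∃ w, 0 < det a w ∧ det a w < det a v ∧ 0 < det w b ∧ det w b < det v b := by
  obtain ⟨u₁, hu₁⟩ := Int.gcd_dvd_left v.1 v.2
  obtain ⟨u₂, hu₂⟩ := Int.gcd_dvd_right v.1 v.2
  set G : ℤ := (Int.gcd v.1 v.2 : ℤ)
  have hav' : det a v = G * det a (u₁, u₂) := by simp only [det]; rw [hu₁, hu₂]; ring
  have hvb' : det v b = G * det (u₁, u₂) b := by simp only [det]; rw [hu₁, hu₂]; ring
  have hG : 2 ≤ G := by
    have : G ≠ 0 := by rintro hG; rw [hG, zero_mul] at hav'; omega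
    omega
  refine ⟨(u₁, u₂), ?_, ?_, ?_, ?_⟩ <;> nlinarith

lemma exists_det_mem_Ioo_of_gcd_eq_one {a b v : ℤ × ℤ} (hD : 0 < det a b) (hav : 0 < det a v)
    (hvb : 0 < det v b) (hg : Int.gcd v.1 v.2 = 1)
    (h : ¬ ∃ m ∈ dualLat (cone2 a b), m ≠ 0 ∧ pairZ m v = 1) :
    ∃ w, 0 < det a w ∧ det a w < det a v ∧ 0 < det w b ∧ det w b < det v b := by
  obtain ⟨u, hvu⟩ : ∃ u, det v u = 1 := ⟨(-Int.gcdB v.1 v.2, Int.gcdA v.1 v.2), by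
    have := Int.gcd_eq_gcd_ab v.1 v.2
    rw [hg, Nat.cast_one] at this
    simp only [det]
    linarith⟩
  have hsign : ∀ k : ℤ, 0 < det a (u - k • v) * det (u - k • v) b := by
    intro k
    set w := u - k • v
    have hvw : det v w = 1 := by rw [det_sub_smul_right, hvu, det_self, mul_zero, sub_zero]
    have hn : ∀ x, pairZ (w.2, -w.1) x = det x w := fun x => by simp only [pairZ, det]; ring
    by_contra! hle
    obtain ⟨hwa, hwb⟩ := det_nonneg_and_det_nonpos_of_det_eq_one hD hav hvb hvw hle
    have hnv : pairZ (w.2, -w.1) v = 1 := by rw [hn, hvw]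
    refine h ⟨(w.2, -w.1), ?_, ne_zero_of_pairZ_ne_zero (hnv ▸ one_ne_zero), hnv⟩
    rw [mem_dualLat_cone2_iff, hn, hn, det_swap w b]
    exact ⟨hwa, by linarith⟩
  obtain ⟨k, hk⟩ := exists_sub_mul_mem_Ioo hav
    (fun k => det_sub_smul_right a u v k ▸ det_sub_smul_left u v b k ▸ hsign k)
  exact ⟨u - k • v, by simpa only [det_sub_smul_right, det_sub_smul_left] using hk⟩

lemma stronglyDecomposable_cone2 {a b v : ℤ × ℤ} (hD : 0 < det a b)
    (hv : toR v ∈ interior (cone2 a b))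
    (h : ¬ ∃ m ∈ dualLat (cone2 a b), m ≠ 0 ∧ pairZ m v = 1) :
    StronglyDecomposable (cone2 a b) v := by
  obtain ⟨hav, hvb⟩ := (toR_mem_interior_cone2_iff hD).1 hv
  obtain ⟨w, hwa, hwa', hwb, hwb'⟩ : ∃ w, 0 < det a w ∧ det a w < det a v ∧
      0 < det w b ∧ det w b < det v b := by
    by_cases hg : Int.gcd v.1 v.2 = 1
    · exact exists_det_mem_Ioo_of_gcd_eq_one hD hav hvb hg h
    · exact exists_det_mem_Ioo_of_gcd_ne_one hav hvb hg
  refine ⟨w, v - w, (toR_mem_interior_cone2_iff hD).2 ⟨hwa, hwb⟩,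
    (toR_mem_interior_cone2_iff hD).2 ?_, by abel⟩
  rw [det_sub_right, det_sub_left]
  omega

theorem stmt9 (a b : ℤ × ℤ) (hind : LinearIndependent ℝ ![toR a, toR b])
    (v : ℤ × ℤ) (hv : toR v ∈ interior (cone2 a b)) :
    StronglyDecomposable (cone2 a b) v ↔
      ¬ ∃ m ∈ hilb (cone2 a b), pairZ m v = 1 := by
  rw [exists_mem_hilb_pairZ_eq_one_iff hv]
  refine ⟨fun hdec ⟨m, hm, hm0, hmv⟩ => ?_, fun h => ?_⟩
  · have := two_le_pairZ_of_stronglyDecomposable hdec hm hm0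
    omega
  rcases (det_ne_zero_of_linearIndependent hind).lt_or_gt with hD | hD
  · rw [cone2_comm] at hv h ⊢
    exact stronglyDecomposable_cone2 (by rw [det_swap]; omega) hv h
  · exact stronglyDecomposable_cone2 hD hv h
end
end

section
/- Let Δ_D ⊆ ℝ² be a polytope and Δ_v = conv(0, w) a lattice segment. The function q ↦ d(q) := wid_u((Δ_D : q·Δ_v)), defined for q ∈ ℝ_{≥0} (with d(q) = −∞ when the quotient is empty), is concave and piecewise linear on the interval where it is finite, and there exists q̂ ≥ 0 such that d(q) = −∞ for all q > q̂. -/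
noncomputable section
open Pointwise

/-- Polytope quotient `(P : Q) = {x | x + Q ⊆ P}`. -/
def quotP (P Q : Set (ℝ × ℝ)) : Set (ℝ × ℝ) := {x | ∀ q ∈ Q, x + q ∈ P}

/-- Width of a set with respect to a lattice functional `u`. -/
def wid (u : ℤ × ℤ) (P : Set (ℝ × ℝ)) : ℝ :=
  sSup ((fun pq : (ℝ × ℝ) × (ℝ × ℝ) => |pairR (pq.1 - pq.2) u|) '' (P ×ˢ P))

/-!
The pairs `(q, t)` with `t = ⟨x - x', u⟩` for `x, x'` in `(Δ_D : qΔ_v) = Δ_D ∩ (Δ_D - q w)` form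
a linear image of the polytope `Δ_D⁴` cut by a linear subspace, hence a polygon: cutting the
convex hull of a finite set by a hyperplane gives the convex hull of its points on the hyperplane
and of the crossings of its edges. By symmetry `d(q)` is the upper boundary of this polygon over
`q`. That boundary is concave, agrees between consecutive abscissae of the vertices with the chord
through its end points, and is the minimum of these chords; the polygon is bounded, so the
quotient is empty for large `q`.
-/

open Finset

section HyperplaneSlice

variable {E : Type*} [AddCommGroup E] [Module ℝ E]

lemma Finset.sum_eq_sum_filter_eq_zero_add_lt_add_gt {ι M : Type*} [AddCommMonoid M]
    (S : Finset ι) (g : ι → ℝ) (f : ι → M) :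
    ∑ i ∈ S, f i = ∑ i ∈ S with g i = 0, f i + ∑ i ∈ S with g i < 0, f i +
      ∑ i ∈ S with 0 < g i, f i := by
  simp only [Finset.sum_filter, ← Finset.sum_add_distrib]
  refine Finset.sum_congr rfl fun i _ => ?_
  rcases lt_trichotomy (g i) 0 with h | h | h
  · simp [h, h.ne, h.not_gt]
  · simp [h]
  · simp [h, h.ne', h.not_gt]

def hyperplaneCrossing (ℓ : E →ₗ[ℝ] ℝ) (n p : E) : E := (ℓ p - ℓ n)⁻¹ • (ℓ p • n - ℓ n • p)

-- For `b = ℓ ∘ v`, the pair terms are positive multiples of `hyperplaneCrossing ℓ (v n) (v p)`.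
lemma sum_product_smul_sub_smul_eq {ι M : Type*} [AddCommGroup M] [Module ℝ M]
    {N P : Finset ι} {a b : ι → ℝ} (v : ι → M) (haN : ∀ n ∈ N, 0 ≤ a n) (haP : ∀ p ∈ P, 0 ≤ a p)
    (hN : ∀ n ∈ N, b n < 0) (hP : ∀ p ∈ P, 0 < b p)
    (hbal : ∑ n ∈ N, a n * b n + ∑ p ∈ P, a p * b p = 0) :
    ∑ np ∈ N ×ˢ P, (a np.1 * a np.2 / ∑ p ∈ P, a p * b p) • (b np.2 • v np.1 - b np.1 • v np.2) =
      ∑ n ∈ N, a n • v n + ∑ p ∈ P, a p • v p := by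
  set σ := ∑ p ∈ P, a p * b p
  rcases eq_or_ne σ 0 with hσ | hσ
  · have hP0 : ∀ p ∈ P, a p = 0 := fun p hp => by
      have := (Finset.sum_eq_zero_iff_of_nonneg fun p hp =>
        mul_nonneg (haP p hp) (hP p hp).le).1 hσ p hp
      simpa [(hP p hp).ne'] using this
    have hN0 : ∀ n ∈ N, a n = 0 := fun n hn => by
      have := (Finset.sum_eq_zero_iff_of_nonpos fun n hn =>
        mul_nonpos_of_nonneg_of_nonpos (haN n hn) (hN n hn).le).1 (by linarith) n hn
      simpa [(hN n hn).ne] using this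
    simp +contextual [Finset.sum_product, hN0, hP0]
  · have hsumP : ∀ n, ∑ p ∈ P, a n * a p / σ * b p = a n := fun n => by
      calc ∑ p ∈ P, a n * a p / σ * b p = a n / σ * σ := by
            rw [Finset.mul_sum]; exact Finset.sum_congr rfl fun p _ => by ring
        _ = a n := by field_simp
    have hsumN : ∀ p, ∑ n ∈ N, a n * a p / σ * b n = -a p := fun p => by
      calc ∑ n ∈ N, a n * a p / σ * b n = a p / σ * (∑ n ∈ N, a n * b n) := by
            rw [Finset.mul_sum]; exact Finset.sum_congr rfl fun n _ => by ring
        _ = -a p := by rw [show ∑ n ∈ N, a n * b n = -σ by linarith]; field_simp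
    simp only [smul_sub, smul_smul, Finset.sum_sub_distrib, Finset.sum_product]
    rw [Finset.sum_comm (s := N) (t := P) (f := fun n p => (a n * a p / σ * b n) • v p)]
    simp only [← Finset.sum_smul, hsumP, hsumN, neg_smul, Finset.sum_neg_distrib, sub_neg_eq_add]

lemma hyperplaneCrossing_mem_ker (ℓ : E →ₗ[ℝ] ℝ) (n p : E) :
    hyperplaneCrossing ℓ n p ∈ LinearMap.ker ℓ := by
  simp [hyperplaneCrossing, mul_comm]

lemma hyperplaneCrossing_mem_segment {ℓ : E →ₗ[ℝ] ℝ} {n p : E} (hn : ℓ n < 0) (hp : 0 < ℓ p) :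
    hyperplaneCrossing ℓ n p ∈ segment ℝ n p := by
  have hd : 0 < ℓ p - ℓ n := by linarith
  refine ⟨ℓ p / (ℓ p - ℓ n), -ℓ n / (ℓ p - ℓ n), by positivity, div_nonneg (by linarith) hd.le,
    by field_simp; ring, ?_⟩
  rw [hyperplaneCrossing]
  module

open scoped Classical in
def sliceFinset (ℓ : E →ₗ[ℝ] ℝ) (S : Finset E) : Finset E :=
  {x ∈ S | ℓ x = 0} ∪
    ({np ∈ S ×ˢ S | ℓ np.1 < 0 ∧ 0 < ℓ np.2}).image fun np => hyperplaneCrossing ℓ np.1 np.2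

lemma mem_sliceFinset {ℓ : E →ₗ[ℝ] ℝ} {S : Finset E} {x : E} :
    x ∈ sliceFinset ℓ S ↔ (x ∈ S ∧ ℓ x = 0) ∨
      ∃ n ∈ S, ∃ p ∈ S, ℓ n < 0 ∧ 0 < ℓ p ∧ hyperplaneCrossing ℓ n p = x := by
  simp [sliceFinset, and_assoc]

lemma sliceFinset_subset_convexHull_inter_ker (ℓ : E →ₗ[ℝ] ℝ) (S : Finset E) :
    (sliceFinset ℓ S : Set E) ⊆ convexHull ℝ (S : Set E) ∩ LinearMap.ker ℓ := by
  intro x hx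
  rcases mem_sliceFinset.1 hx with ⟨hxS, hx0⟩ | ⟨n, hn, p, hp, hn0, hp0, rfl⟩
  · exact ⟨subset_convexHull ℝ _ hxS, hx0⟩
  · exact ⟨segment_subset_convexHull hn hp (hyperplaneCrossing_mem_segment hn0 hp0),
      hyperplaneCrossing_mem_ker ℓ n p⟩

lemma convexHull_inter_ker_subset_convexHull_sliceFinset (ℓ : E →ₗ[ℝ] ℝ) (S : Finset E) :
    convexHull ℝ (S : Set E) ∩ LinearMap.ker ℓ ⊆ convexHull ℝ (sliceFinset ℓ S : Set E) := by
  classical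
  rintro x ⟨hx, hx0⟩
  obtain ⟨a, ha0, ha1, rfl⟩ := Finset.mem_convexHull'.1 hx
  set Z := {y ∈ S | ℓ y = 0}
  set N := {y ∈ S | ℓ y < 0}
  set P := {y ∈ S | 0 < ℓ y}
  have haN : ∀ n ∈ N, 0 ≤ a n := fun n hn => ha0 n (mem_filter.1 hn).1
  have haP : ∀ p ∈ P, 0 ≤ a p := fun p hp => ha0 p (mem_filter.1 hp).1
  have hN : ∀ n ∈ N, ℓ n < 0 := fun n hn => (mem_filter.1 hn).2
  have hP : ∀ p ∈ P, 0 < ℓ p := fun p hp => (mem_filter.1 hp).2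
  have hbal : ∑ n ∈ N, a n * ℓ n + ∑ p ∈ P, a p * ℓ p = 0 := by
    have hZ : ∑ y ∈ Z, a y * ℓ y = 0 := sum_eq_zero fun y hy => by simp [(mem_filter.1 hy).2]
    have := Finset.sum_eq_sum_filter_eq_zero_add_lt_add_gt S ℓ fun y => a y * ℓ y
    simp only [SetLike.mem_coe, LinearMap.mem_ker, map_sum, map_smul, smul_eq_mul] at hx0
    linarith
  have key₁ := sum_product_smul_sub_smul_eq (fun _ => (1 : ℝ)) haN haP hN hP hbal
  have key₂ := sum_product_smul_sub_smul_eq id haN haP hN hP hbal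
  simp only [smul_eq_mul, mul_one] at key₁
  simp only [id] at key₂
  set σ := ∑ p ∈ P, a p * ℓ p
  have hσ : 0 ≤ σ := sum_nonneg fun p hp => mul_nonneg (haP p hp) (hP p hp).le
  let μ : E ⊕ (E × E) → ℝ := Sum.elim a fun np => a np.1 * a np.2 * (ℓ np.2 - ℓ np.1) / σ
  let z : E ⊕ (E × E) → E := Sum.elim id fun np => hyperplaneCrossing ℓ np.1 np.2
  have hμ0 : ∀ i ∈ Z.disjSum (N ×ˢ P), 0 ≤ μ i := by
    rintro (y | ⟨n, p⟩) hi
    · exact ha0 y (mem_filter.1 (inl_mem_disjSum.1 hi)).1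
    · obtain ⟨hn, hp⟩ := mem_product.1 (inr_mem_disjSum.1 hi)
      have := hN n hn; have := hP p hp
      exact div_nonneg (mul_nonneg (mul_nonneg (haN n hn) (haP p hp)) (by linarith)) hσ
  have hμ1 : ∑ i ∈ Z.disjSum (N ×ˢ P), μ i = 1 := by
    rw [sum_disjSum, ← ha1, Finset.sum_eq_sum_filter_eq_zero_add_lt_add_gt S ℓ a, add_assoc,
      ← key₁]
    refine congrArg _ (sum_congr rfl fun np _ => ?_)
    simp only [μ, Sum.elim_inr]
    ring
  have hμz : ∑ i ∈ Z.disjSum (N ×ˢ P), μ i • z i = ∑ y ∈ S, a y • y := by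
    rw [sum_disjSum, Finset.sum_eq_sum_filter_eq_zero_add_lt_add_gt S ℓ fun y => a y • y,
      add_assoc, ← key₂]
    refine congrArg _ (sum_congr rfl fun np hnp => ?_)
    obtain ⟨hn, hp⟩ := mem_product.1 hnp
    have hd : ℓ np.2 - ℓ np.1 ≠ 0 := by linarith [hN _ hn, hP _ hp]
    simp only [μ, z, Sum.elim_inr, hyperplaneCrossing, smul_smul]
    congr 1
    field_simp
  have hz : ∀ i ∈ Z.disjSum (N ×ˢ P), z i ∈ (sliceFinset ℓ S : Set E) := by
    rintro (y | ⟨n, p⟩) hi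
    · exact mem_sliceFinset.2 (Or.inl (mem_filter.1 (inl_mem_disjSum.1 hi)))
    · obtain ⟨hn, hp⟩ := mem_product.1 (inr_mem_disjSum.1 hi)
      exact mem_sliceFinset.2 (Or.inr ⟨n, (mem_filter.1 hn).1, p, (mem_filter.1 hp).1,
        hN n hn, hP p hp, rfl⟩)
  exact hμz ▸ (convex_convexHull ℝ _).sum_mem hμ0 hμ1 fun i hi => subset_convexHull ℝ _ (hz i hi)

theorem convexHull_sliceFinset (ℓ : E →ₗ[ℝ] ℝ) (S : Finset E) :
    convexHull ℝ (sliceFinset ℓ S : Set E) = convexHull ℝ (S : Set E) ∩ LinearMap.ker ℓ :=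
  (convexHull_min (sliceFinset_subset_convexHull_inter_ker ℓ S)
    ((convex_convexHull ℝ _).inter (LinearMap.ker ℓ).convex)).antisymm
    (convexHull_inter_ker_subset_convexHull_sliceFinset ℓ S)

end HyperplaneSlice

theorem exists_finset_convexHull_eq_inter_ker {E F : Type*} [AddCommGroup E] [Module ℝ E]
    [AddCommGroup F] [Module ℝ F] [FiniteDimensional ℝ F] (L : E →ₗ[ℝ] F) (S : Finset E) :
    ∃ T : Finset E, convexHull ℝ (T : Set E) = convexHull ℝ (S : Set E) ∩ LinearMap.ker L := by
  classical
  let b := Module.finBasis ℝ F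
  have key : ∀ s : Finset (Fin (Module.finrank ℝ F)), ∃ T : Finset E,
      convexHull ℝ (T : Set E) = convexHull ℝ (S : Set E) ∩ {x | ∀ i ∈ s, b.coord i (L x) = 0} := by
    intro s
    induction s using Finset.induction_on with
    | empty => exact ⟨S, by simp⟩
    | insert i s _ ih =>
      obtain ⟨T, hT⟩ := ih
      refine ⟨sliceFinset (b.coord i ∘ₗ L) T, ?_⟩
      rw [convexHull_sliceFinset, hT]
      ext x
      simp only [Set.mem_inter_iff, SetLike.mem_coe, LinearMap.mem_ker, LinearMap.coe_comp,
        Function.comp_apply, Set.mem_ofPred_eq, forall_mem_insert]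
      tauto
  obtain ⟨T, hT⟩ := key Finset.univ
  refine ⟨T, hT.trans ?_⟩
  ext x
  simp only [Set.mem_inter_iff, Set.mem_ofPred_eq, mem_univ, true_implies,
    b.forall_coord_eq_zero_iff, SetLike.mem_coe, LinearMap.mem_ker]

theorem exists_finset_convexHull_eq_translate_pairs {E : Type*} [AddCommGroup E] [Module ℝ E]
    [FiniteDimensional ℝ E] (V : Finset E) {s : E} (hs : s ≠ 0) (g : E →ₗ[ℝ] ℝ) :
    ∃ F : Finset (ℝ × ℝ), convexHull ℝ (F : Set (ℝ × ℝ)) =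
      {z | ∃ x x', (x ∈ convexHull ℝ ↑V ∧ x + z.1 • s ∈ convexHull ℝ ↑V) ∧
        (x' ∈ convexHull ℝ ↑V ∧ x' + z.1 • s ∈ convexHull ℝ ↑V) ∧ g x - g x' = z.2} := by
  classical
  obtain ⟨φ, hφ⟩ := Module.Projective.exists_dual_eq_one ℝ hs
  -- points of `E × E × E × E` are read as `(x, y, x', y')`
  let x₁ : E × E × E × E →ₗ[ℝ] E := LinearMap.fst ℝ E _
  let y₁ : E × E × E × E →ₗ[ℝ] E := LinearMap.fst ℝ E _ ∘ₗ LinearMap.snd ℝ E _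
  let x₂ : E × E × E × E →ₗ[ℝ] E :=
    LinearMap.fst ℝ E _ ∘ₗ LinearMap.snd ℝ E _ ∘ₗ LinearMap.snd ℝ E _
  let y₂ : E × E × E × E →ₗ[ℝ] E :=
    LinearMap.snd ℝ E _ ∘ₗ LinearMap.snd ℝ E _ ∘ₗ LinearMap.snd ℝ E _
  -- `L = 0` says `y - x = y' - x' ∈ ℝ s`, and then `M` reads off `(q, g x - g x')`
  let L := ((y₁ - x₁) - (y₂ - x₂)).prod ((y₁ - x₁) - (φ ∘ₗ (y₁ - x₁)).smulRight s)
  let M := (φ ∘ₗ (y₁ - x₁)).prod (g ∘ₗ x₁ - g ∘ₗ x₂)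
  obtain ⟨T, hT⟩ := exists_finset_convexHull_eq_inter_ker L (V ×ˢ V ×ˢ V ×ˢ V)
  refine ⟨T.image M, ?_⟩
  rw [coe_image, ← M.image_convexHull, hT]
  simp only [coe_product, convexHull_prod]
  ext ⟨q, t⟩
  constructor
  · rintro ⟨⟨x, y, x', y'⟩, ⟨⟨hx, hy, hx', hy'⟩, hL⟩, hM⟩
    simp only [LinearMap.ker_prod, Submodule.coe_inf, Set.mem_inter_iff, SetLike.mem_coe,
      LinearMap.mem_ker, LinearMap.sub_apply, LinearMap.coe_comp, LinearMap.coe_fst,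
      LinearMap.coe_snd, Function.comp_apply, LinearMap.coe_smulRight, map_sub,
      LinearMap.prod_apply, Function.prod_apply, Prod.mk.injEq, L, y₁, x₁, y₂, x₂, M] at hL hM
    obtain ⟨hyy, hys⟩ := hL
    obtain ⟨rfl, rfl⟩ := hM
    have hy_eq : x + (φ y - φ x) • s = y := by linear_combination (norm := module) -hys
    have hy'_eq : x' + (φ y - φ x) • s = y' := by
      linear_combination (norm := module) hyy - hys
    refine ⟨x, x', ⟨hx, ?_⟩, ⟨hx', ?_⟩, rfl⟩
    · rwa [hy_eq]
    · rwa [hy'_eq]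
  · rintro ⟨x, x', ⟨hx, hy⟩, ⟨hx', hy'⟩, rfl⟩
    exact ⟨(x, x + q • s, x', x' + q • s), ⟨⟨hx, hy, hx', hy'⟩, by simp [L, x₁, y₁, x₂, y₂, hφ]⟩,
      by simp [M, x₁, y₁, x₂, hφ]⟩

lemma ConcaveOn.add_slope_mul_le {s : Set ℝ} {f : ℝ → ℝ} (hf : ConcaveOn ℝ s f) {x₁ x₂ q : ℝ}
    (hx₁ : x₁ ∈ s) (hx₂ : x₂ ∈ s) (h₁ : x₁ ≤ q) (h₂ : q ≤ x₂) :
    f x₁ + slope f x₁ x₂ * (q - x₁) ≤ f q := by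
  rcases h₁.eq_or_lt with rfl | h₁
  · simp
  rcases h₂.eq_or_lt with rfl | h₂
  · rw [slope_def_field, div_mul_cancel₀ _ (sub_ne_zero.2 h₁.ne')]
    exact le_of_eq (by ring)
  have h := hf.slope_anti_adjacent hx₁ hx₂ h₁ h₂
  rw [div_le_div_iff₀ (by linarith) (by linarith)] at h
  rw [slope_def_field, div_mul_eq_mul_div, ← le_sub_iff_add_le', div_le_iff₀ (by linarith)]
  nlinarith

lemma ConcaveOn.le_add_slope_mul {s : Set ℝ} {f : ℝ → ℝ} (hf : ConcaveOn ℝ s f) {x₁ x₂ x : ℝ}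
    (hx₁ : x₁ ∈ s) (hx₂ : x₂ ∈ s) (hx : x ∈ s) (hlt : x₁ < x₂) (hout : x ≤ x₁ ∨ x₂ ≤ x) :
    f x ≤ f x₁ + slope f x₁ x₂ * (x - x₁) := by
  rw [slope_def_field, div_mul_eq_mul_div, ← sub_le_iff_le_add', le_div_iff₀ (by linarith)]
  rcases hout with hout | hout
  · rcases hout.eq_or_lt with rfl | hout
    · simp
    have h := hf.slope_anti_adjacent hx hx₂ hout hlt
    rw [div_le_div_iff₀ (by linarith) (by linarith)] at h
    nlinarith
  · rcases hout.eq_or_lt with rfl | hout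
    · exact le_of_eq (by ring)
    have h := hf.slope_anti_adjacent hx₁ hx hlt hout
    rw [div_le_div_iff₀ (by linarith) (by linarith)] at h
    nlinarith

lemma Finset.exists_adjacent_le_le {α : Type*} [LinearOrder α] {X : Finset α} {a b q : α}
    (ha : a ∈ X) (hb : b ∈ X) (hab : a < b) (haq : a ≤ q) (hqb : q ≤ b) :
    ∃ x₁ ∈ X, ∃ x₂ ∈ X, x₁ < x₂ ∧ x₁ ≤ q ∧ q ≤ x₂ ∧ ∀ x ∈ X, x ≤ x₁ ∨ x₂ ≤ x := by
  classical
  have hR : ({x ∈ X | q ≤ x ∧ a < x}).Nonempty := ⟨b, mem_filter.2 ⟨hb, hqb, hab⟩⟩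
  set x₂ := ({x ∈ X | q ≤ x ∧ a < x}).min' hR
  obtain ⟨hx₂, hqx₂, hax₂⟩ := mem_filter.1 (min'_mem _ hR)
  have hL : ({x ∈ X | x < x₂}).Nonempty := ⟨a, mem_filter.2 ⟨ha, hax₂⟩⟩
  set x₁ := ({x ∈ X | x < x₂}).max' hL
  obtain ⟨hx₁, hx₁x₂⟩ := mem_filter.1 (max'_mem _ hL)
  have hx₁q : x₁ ≤ q := by
    by_contra! hqx₁
    exact (min'_le _ x₁ (mem_filter.2 ⟨hx₁, hqx₁.le, haq.trans_lt hqx₁⟩)).not_gt hx₁x₂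
  refine ⟨x₁, hx₁, x₂, hx₂, hx₁x₂, hx₁q, hqx₂, fun x hx => ?_⟩
  rcases lt_or_ge x x₂ with h | h
  · exact Or.inl (le_max' _ x (mem_filter.2 ⟨hx, h⟩))
  · exact Or.inr h

section UpperEnvelope

def upperEnvelope (S : Finset (ℝ × ℝ)) (q : ℝ) : ℝ :=
  sSup {t | (q, t) ∈ convexHull ℝ (S : Set (ℝ × ℝ))}

variable {S : Finset (ℝ × ℝ)} {q t : ℝ}

lemma isCompact_setOf_mk_mem_convexHull (S : Finset (ℝ × ℝ)) (q : ℝ) :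
    IsCompact {t | (q, t) ∈ convexHull ℝ (S : Set (ℝ × ℝ))} := by
  have hK : IsCompact (convexHull ℝ (S : Set (ℝ × ℝ))) := S.finite_toSet.isCompact_convexHull ℝ
  exact (hK.image continuous_snd).of_isClosed_subset (hK.isClosed.preimage (by fun_prop))
    fun t ht => ⟨(q, t), ht, rfl⟩

lemma le_upperEnvelope (h : (q, t) ∈ convexHull ℝ (S : Set (ℝ × ℝ))) : t ≤ upperEnvelope S q :=
  le_csSup (isCompact_setOf_mk_mem_convexHull S q).bddAbove h

lemma mk_upperEnvelope_mem (hq : q ∈ Prod.fst '' convexHull ℝ (S : Set (ℝ × ℝ))) :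
    (q, upperEnvelope S q) ∈ convexHull ℝ (S : Set (ℝ × ℝ)) := by
  obtain ⟨⟨q, t⟩, h, rfl⟩ := hq
  exact (isCompact_setOf_mk_mem_convexHull S q).sSup_mem ⟨t, h⟩

lemma concaveOn_upperEnvelope (S : Finset (ℝ × ℝ)) :
    ConcaveOn ℝ (Prod.fst '' convexHull ℝ (S : Set (ℝ × ℝ))) (upperEnvelope S) := by
  refine ⟨(convex_convexHull ℝ _).linear_image (LinearMap.fst ℝ ℝ ℝ), ?_⟩
  intro q₁ h₁ q₂ h₂ a b ha hb hab
  apply le_upperEnvelope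
  convert (convex_convexHull ℝ _) (mk_upperEnvelope_mem h₁) (mk_upperEnvelope_mem h₂) ha hb hab
    using 1
  simp

lemma upperEnvelope_le_of_forall_le {a b : ℝ} (hS : ∀ p ∈ S, p.2 ≤ a * p.1 + b)
    (hq : q ∈ Prod.fst '' convexHull ℝ (S : Set (ℝ × ℝ))) : upperEnvelope S q ≤ a * q + b := by
  have hlin : IsLinearMap ℝ fun p : ℝ × ℝ => p.2 - a * p.1 :=
    ⟨fun p p' => by simp only [Prod.fst_add, Prod.snd_add]; ring,
      fun c p => by simp only [Prod.smul_fst, Prod.smul_snd, smul_eq_mul]; ring⟩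
  have := convexHull_min (fun p hp => by simp only [Set.mem_ofPred_eq]; linarith [hS p hp])
    (convex_halfSpace_le hlin b) (mk_upperEnvelope_mem hq)
  simp only [Set.mem_ofPred_eq] at this
  linarith

lemma mem_Icc_of_mem_fst_image_convexHull (hS : S.Nonempty)
    (hq : q ∈ Prod.fst '' convexHull ℝ (S : Set (ℝ × ℝ))) :
    q ∈ Set.Icc ((S.image Prod.fst).min' (hS.image _)) ((S.image Prod.fst).max' (hS.image _)) := by
  obtain ⟨p, hp, rfl⟩ := hq
  refine convexHull_min (fun p hp => ?_) ((convex_Icc _ _).linear_preimage (LinearMap.fst ℝ ℝ ℝ)) hp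
  exact ⟨min'_le _ _ (mem_image_of_mem _ hp), le_max' _ _ (mem_image_of_mem _ hp)⟩

theorem exists_finset_upperEnvelope_eq_inf' (S : Finset (ℝ × ℝ)) :
    ∃ (F : Finset (ℝ × ℝ)) (hF : F.Nonempty), ∀ q ∈ Prod.fst '' convexHull ℝ (S : Set (ℝ × ℝ)),
      upperEnvelope S q = F.inf' hF fun ab => ab.1 * q + ab.2 := by
  classical
  set J := Prod.fst '' convexHull ℝ (S : Set (ℝ × ℝ))
  rcases S.eq_empty_or_nonempty with rfl | hS
  · exact ⟨{0}, singleton_nonempty _, by simp [J]⟩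
  set X := S.image Prod.fst
  have hXJ : ∀ x ∈ X, x ∈ J := by
    intro x hx
    obtain ⟨p, hp, rfl⟩ := mem_image.1 hx
    exact ⟨p, subset_convexHull ℝ _ hp, rfl⟩
  have hJ := fun q (hq : q ∈ J) => mem_Icc_of_mem_fst_image_convexHull hS hq
  have hconc := concaveOn_upperEnvelope S
  set h := upperEnvelope S
  rcases (min'_le_max' X (hS.image _)).eq_or_lt with hdeg | hlt
  · refine ⟨{(0, h (X.min' (hS.image _)))}, singleton_nonempty _, fun q hq => ?_⟩
    have hq := hJ q hq
    rw [inf'_singleton, zero_mul, zero_add, le_antisymm (hdeg ▸ hq.2) hq.1]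
  -- the chords of `h` over consecutive abscissae of `S`
  let chord : ℝ × ℝ → ℝ × ℝ := fun x => (slope h x.1 x.2, h x.1 - slope h x.1 x.2 * x.1)
  let F := ({x ∈ X ×ˢ X | x.1 < x.2 ∧ ∀ y ∈ X, y ≤ x.1 ∨ x.2 ≤ y}).image chord
  have hbracket : ∀ q ∈ J, ∃ x ∈ X ×ˢ X, (x.1 < x.2 ∧ ∀ y ∈ X, y ≤ x.1 ∨ x.2 ≤ y) ∧
      x.1 ≤ q ∧ q ≤ x.2 := by
    intro q hq
    obtain ⟨x₁, hx₁, x₂, hx₂, hlt, h₁, h₂, hadj⟩ :=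
      exists_adjacent_le_le (min'_mem X _) (max'_mem X _) hlt (hJ q hq).1 (hJ q hq).2
    exact ⟨(x₁, x₂), mem_product.2 ⟨hx₁, hx₂⟩, ⟨hlt, hadj⟩, h₁, h₂⟩
  obtain ⟨x₀, hx₀⟩ := hS
  obtain ⟨x, hx, hxF, -⟩ := hbracket _ (hXJ _ (mem_image_of_mem _ hx₀))
  refine ⟨F, ⟨chord x, mem_image_of_mem _ (mem_filter.2 ⟨hx, hxF⟩)⟩, fun q hq => ?_⟩
  apply le_antisymm
  · refine le_inf' _ _ fun ab hab => ?_
    obtain ⟨⟨x₁, x₂⟩, hx, rfl⟩ := mem_image.1 hab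
    obtain ⟨hx, hlt, hadj⟩ := mem_filter.1 hx
    obtain ⟨hx₁, hx₂⟩ := mem_product.1 hx
    refine upperEnvelope_le_of_forall_le (fun p hp => ?_) hq
    have hpX : p.1 ∈ X := mem_image_of_mem _ hp
    have := hconc.le_add_slope_mul (hXJ _ hx₁) (hXJ _ hx₂) (hXJ _ hpX) hlt (hadj _ hpX)
    have := le_upperEnvelope (subset_convexHull ℝ _ hp : (p.1, p.2) ∈ _)
    simp only [chord]
    linarith
  · obtain ⟨⟨x₁, x₂⟩, hx, hxF, h₁, h₂⟩ := hbracket q hq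
    obtain ⟨hx₁, hx₂⟩ := mem_product.1 hx
    refine inf'_le_of_le _ (mem_image_of_mem _ (mem_filter.2 ⟨hx, hxF⟩)) ?_
    have := hconc.add_slope_mul_le (hXJ _ hx₁) (hXJ _ hx₂) h₁ h₂
    simp only [chord]
    linarith

end UpperEnvelope

lemma quotP_convexHull_zero_pair {D : Set (ℝ × ℝ)} (hD : Convex ℝ D) (v : ℝ × ℝ) :
    quotP D (convexHull ℝ {0, v}) = {x | x ∈ D ∧ x + v ∈ D} := by
  ext x
  rw [convexHull_pair]
  refine ⟨fun h => ⟨by simpa using h 0 (left_mem_segment ℝ 0 v), h v (right_mem_segment ℝ 0 v)⟩,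
    fun h z hz => hD.segment_subset h.1 h.2 ?_⟩
  simpa using (mem_segment_translate ℝ x).2 hz

def pairRₗ (u : ℤ × ℤ) : ℝ × ℝ →ₗ[ℝ] ℝ where
  toFun x := pairR x u
  map_add' x y := by simp only [pairR, Prod.fst_add, Prod.snd_add]; ring
  map_smul' c x := by simp only [pairR, Prod.smul_fst, Prod.smul_snd, smul_eq_mul,
    RingHom.id_apply]; ring

lemma wid_eq_sSup_sub (u : ℤ × ℤ) (Q : Set (ℝ × ℝ)) :
    wid u Q = sSup {t | ∃ x ∈ Q, ∃ x' ∈ Q, pairR x u - pairR x' u = t} := by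
  have hsub : ∀ x x', pairR (x - x') u = pairR x u - pairR x' u := map_sub (pairRₗ u)
  refine csSup_eq_csSup_of_forall_exists_le ?_ ?_
  · rintro _ ⟨⟨x, x'⟩, ⟨hx, hx'⟩, rfl⟩
    dsimp only
    rcases abs_choice (pairR (x - x') u) with h | h <;> rw [h, hsub]
    · exact ⟨_, ⟨x, hx, x', hx', rfl⟩, le_rfl⟩
    · exact ⟨_, ⟨x', hx', x, hx, rfl⟩, by rw [neg_sub]⟩
  · rintro _ ⟨x, hx, x', hx', rfl⟩
    exact ⟨_, ⟨(x, x'), ⟨hx, hx'⟩, rfl⟩, (hsub x x').symm ▸ le_abs_self _⟩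

theorem exists_upperEnvelope_eq_wid (V : Finset (ℝ × ℝ)) {w : ℤ × ℤ} (hw : w ≠ 0) (u : ℤ × ℤ) :
    ∃ F₂ : Finset (ℝ × ℝ), ∀ q : ℝ,
      (q ∈ Prod.fst '' convexHull ℝ (F₂ : Set (ℝ × ℝ)) ↔
        (quotP (convexHull ℝ ↑V) (convexHull ℝ {0, q • toR w})).Nonempty) ∧
      upperEnvelope F₂ q = wid u (quotP (convexHull ℝ ↑V) (convexHull ℝ {0, q • toR w})) := by
  have hs : toR w ≠ 0 := by simpa [toR, Prod.ext_iff] using hw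
  obtain ⟨F₂, hF₂⟩ := exists_finset_convexHull_eq_translate_pairs V hs (pairRₗ u)
  refine ⟨F₂, fun q => ?_⟩
  set Q := quotP (convexHull ℝ ↑V) (convexHull ℝ {0, q • toR w})
  have hfiber : {t | (q, t) ∈ convexHull ℝ (F₂ : Set (ℝ × ℝ))} =
      {t | ∃ x ∈ Q, ∃ x' ∈ Q, pairR x u - pairR x' u = t} := by
    simp only [Q, hF₂, quotP_convexHull_zero_pair (convex_convexHull ℝ _)]
    ext t
    exact ⟨fun ⟨x, x', hx, hx', h⟩ => ⟨x, hx, x', hx', h⟩,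
      fun ⟨x, hx, x', hx', h⟩ => ⟨x, x', hx, hx', h⟩⟩
  have hmem := Set.ext_iff.1 hfiber
  refine ⟨⟨?_, ?_⟩, by rw [wid_eq_sSup_sub, upperEnvelope, hfiber]⟩
  · rintro ⟨⟨q, t⟩, h, rfl⟩
    obtain ⟨x, hx, -⟩ := (hmem t).1 h
    exact ⟨x, hx⟩
  · rintro ⟨x, hx⟩
    exact ⟨(q, 0), (hmem 0).2 ⟨x, hx, x, hx, sub_self _⟩, rfl⟩

theorem stmt15_general (V : Finset (ℝ × ℝ)) (w : ℤ × ℤ) (hw : w ≠ 0)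
    (u : ℤ × ℤ)
    (D : Set (ℝ × ℝ)) (hD : D = convexHull ℝ (V : Set (ℝ × ℝ)))
    (I : Set ℝ) (hI : I = {q : ℝ | 0 ≤ q ∧ (quotP D (convexHull ℝ {(0 : ℝ × ℝ), q • toR w})).Nonempty})
    (d : ℝ → ℝ) (hd : ∀ q, d q = wid u (quotP D (convexHull ℝ {(0 : ℝ × ℝ), q • toR w}))) :
    ConcaveOn ℝ I d ∧
    (∃ F : Finset (ℝ × ℝ), ∃ hF : F.Nonempty,
      ∀ q ∈ I, d q = F.inf' hF (fun ab => ab.1 * q + ab.2)) ∧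
    (∃ qhat : ℝ, 0 ≤ qhat ∧ ∀ q > qhat,
      quotP D (convexHull ℝ {(0 : ℝ × ℝ), q • toR w}) = ∅) := by
  subst hD
  obtain ⟨F₂, hF₂⟩ := exists_upperEnvelope_eq_wid V hw u
  have hdJ : ∀ q, d q = upperEnvelope F₂ q := fun q => (hd q).trans (hF₂ q).2.symm
  have hIJ : I = Set.Ici 0 ∩ Prod.fst '' convexHull ℝ (F₂ : Set (ℝ × ℝ)) := by
    ext q
    simp [hI, (hF₂ q).1]
  refine ⟨?_, ?_, ?_⟩
  · exact ((concaveOn_upperEnvelope F₂).subset (hIJ ▸ Set.inter_subset_right)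
      (hIJ ▸ (convex_Ici 0).inter (concaveOn_upperEnvelope F₂).1)).congr fun q _ => (hdJ q).symm
  · obtain ⟨F, hF, hFeq⟩ := exists_finset_upperEnvelope_eq_inf' F₂
    exact ⟨F, hF, fun q hq => (hdJ q).trans (hFeq q (hIJ ▸ hq).2)⟩
  · obtain ⟨B, hB⟩ := ((F₂.finite_toSet.isCompact_convexHull ℝ).image continuous_fst).bddAbove
    refine ⟨max B 0, le_max_right B 0, fun q hq => Set.not_nonempty_iff_eq_empty.1 fun hne => ?_⟩
    linarith [hB ((hF₂ q).1.2 hne), le_max_left B 0]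

theorem stmt15 (V : Finset (ℝ × ℝ)) (hV : V.Nonempty) (w : ℤ × ℤ) (hw : w ≠ 0)
    (u : ℤ × ℤ) (hu : u ≠ 0)
    (D : Set (ℝ × ℝ)) (hD : D = convexHull ℝ (V : Set (ℝ × ℝ)))
    (I : Set ℝ) (hI : I = {q : ℝ | 0 ≤ q ∧ (quotP D (convexHull ℝ {(0 : ℝ × ℝ), q • toR w})).Nonempty})
    (d : ℝ → ℝ) (hd : ∀ q, d q = wid u (quotP D (convexHull ℝ {(0 : ℝ × ℝ), q • toR w}))) :
    ConcaveOn ℝ I d ∧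
    (∃ F : Finset (ℝ × ℝ), ∃ hF : F.Nonempty,
      ∀ q ∈ I, d q = F.inf' hF (fun ab => ab.1 * q + ab.2)) ∧
    (∃ qhat : ℝ, 0 ≤ qhat ∧ ∀ q > qhat,
      quotP D (convexHull ℝ {(0 : ℝ × ℝ), q • toR w}) = ∅) :=
  stmt15_general V w hw u D hD I hI d hd
end
end
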